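/- arXiv:1707.02751 — 9 statements merged into one kernel-verified Lean document; each statement's English description precedes it below -/
import Mathlib

section
/- Let 0 < λ' < λ. Then for every z ∈ ℂ with |Im z| < min(r/4, r²(λ−λ')/(8M)) one has |Im F(z)| ≥ λ' |Im z|. -/
/-!
Since `D` is real, `Im F` is `1`-periodic, so we may take `Re z ∈ [0, 1]`; by Schwarz reflection
`F (conj z) = conj (F z)`, so we may take `Im z ≥ 0`. On the vertical segment `x + t i`,
`0 ≤ t ≤ r/4`, the disc of radius `r/2 - t` lies in the box where `|F| ≤ M`, so Cauchy's estimate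
gives `|F''| ≤ 2M/(r/2 - t)²`. Integrating once, `Re F'(x + t i) ≥ λ - 16Mt/r²`; integrating again,
`Im F(x + y i) ≥ λy - 8My²/r²`, which is at least `λ'y` as soon as `y < r²(λ - λ')/(8M)`.
-/

open Set Metric Complex Filter Topology ComplexConjugate

def strip (r : ℝ) : Set ℂ := {z : ℂ | |z.im| < r}

lemma mem_strip {r : ℝ} {z : ℂ} : z ∈ strip r ↔ |z.im| < r := Iff.rfl

lemma isOpen_strip (r : ℝ) : IsOpen (strip r) :=
  isOpen_lt (continuous_abs.comp continuous_im) continuous_const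

lemma convex_strip (r : ℝ) : Convex ℝ (strip r) := by
  have : strip r = imLm ⁻¹' Ioo (-r) r := by ext z; simp [mem_strip, abs_lt]
  exact this ▸ (convex_Ioo (-r) r).linear_preimage imLm

lemma add_intCast_mem_strip {r : ℝ} {z : ℂ} (n : ℤ) : z + n ∈ strip r ↔ z ∈ strip r := by
  simp [mem_strip]

lemma conj_mem_strip {r : ℝ} {z : ℂ} : conj z ∈ strip r ↔ z ∈ strip r := by
  simp [mem_strip]

lemma apply_add_intCast_eq {α : Type*} {g : ℂ → α} {r : ℝ}
    (hg : ∀ z ∈ strip r, g (z + 1) = g z) (n : ℤ) {z : ℂ} (hz : z ∈ strip r) :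
    g (z + n) = g z := by
  induction n using Int.induction_on with
  | zero => simp
  | succ k ih =>
    rw [Int.cast_add, Int.cast_one, ← add_assoc, hg _ ((add_intCast_mem_strip k).2 hz), ih]
  | pred k ih =>
    rw [← hg _ ((add_intCast_mem_strip _).2 hz), ← ih]
    push_cast
    ring_nf

theorem eqOn_conj_comp_conj_of_im_eq_zero {U : Set ℂ} {f : ℂ → ℂ} (hU : IsOpen U)
    (hU_conn : IsPreconnected U) (hU_conj : ∀ z ∈ U, conj z ∈ U) {x₀ : ℝ} (hx₀ : (x₀ : ℂ) ∈ U)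
    (hf : DifferentiableOn ℂ f U) (hf_real : ∀ x : ℝ, (x : ℂ) ∈ U → (f x).im = 0) :
    EqOn (conj ∘ f ∘ conj) f U := by
  have hg : DifferentiableOn ℂ (conj ∘ f ∘ conj) U := fun z hz =>
    (differentiableAt_conj_conj_iff.2
      (hf.differentiableAt (hU.mem_nhds (hU_conj z hz)))).differentiableWithinAt
  have h_real : ∀ᶠ x : ℝ in 𝓝[≠] x₀, (conj ∘ f ∘ conj) (x : ℂ) = f x := by
    have : ∀ᶠ x : ℝ in 𝓝 x₀, (x : ℂ) ∈ U :=
      continuous_ofReal.continuousAt.preimage_mem_nhds (hU.mem_nhds hx₀)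
    filter_upwards [nhdsWithin_le_nhds this] with x hx
    simp [conj_eq_iff_im.2 (hf_real x hx)]
  have h_tendsto : Tendsto ofReal (𝓝[≠] x₀) (𝓝[≠] (x₀ : ℂ)) :=
    continuous_ofReal.continuousWithinAt.tendsto_nhdsWithin fun x hx => by simpa using hx
  exact (hg.analyticOnNhd hU).eqOn_of_preconnected_of_frequently_eq (hf.analyticOnNhd hU)
    hU_conn hx₀ (h_tendsto.frequently h_real.frequently)

lemma HasDerivAt.comp_add_ofReal_mul_I {f : ℂ → ℂ} {f' : ℂ} {x t : ℝ}
    (hf : HasDerivAt f f' (x + t * I)) : HasDerivAt (fun s : ℝ => f (x + s * I)) (f' * I) t := by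
  have hline : HasDerivAt (fun s : ℝ => (x : ℂ) + s * I) I t := by
    simpa using ((hasDerivAt_id (t : ℂ)).comp_ofReal.mul_const I).const_add (x : ℂ)
  exact hf.comp t hline

lemma norm_deriv_deriv_le_of_forall_mem_sphere_norm_le {f : ℂ → ℂ} {c : ℂ} {R C : ℝ}
    (hR : 0 < R) (hf : DifferentiableOn ℂ f (closedBall c R))
    (hC : ∀ z ∈ sphere c R, ‖f z‖ ≤ C) : ‖deriv (deriv f) c‖ ≤ 2 * C / R ^ 2 := by
  simpa [iteratedDeriv_succ] using
    norm_iteratedDeriv_le_of_forall_mem_sphere_norm_le 2 hR (hf.diffContOnCl_ball subset_rfl) hC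

lemma le_of_hasDerivAt_le_of_le {f g f' g' : ℝ → ℝ} {a b : ℝ}
    (hf : ∀ t ∈ Icc a b, HasDerivAt f (f' t) t) (hg : ∀ t ∈ Icc a b, HasDerivAt g (g' t) t)
    (ha : f a ≤ g a) (hfg' : ∀ t ∈ Ico a b, f' t ≤ g' t) : ∀ t ∈ Icc a b, f t ≤ g t :=
  image_le_of_deriv_right_le_deriv_boundary
    (fun t ht => (hf t ht).continuousAt.continuousWithinAt)
    (fun t ht => (hf t (Ico_subset_Icc_self ht)).hasDerivWithinAt) ha
    (fun t ht => (hg t ht).continuousAt.continuousWithinAt)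
    (fun t ht => (hg t (Ico_subset_Icc_self ht)).hasDerivWithinAt) hfg'

lemma re_mem_Icc_and_abs_im_le_of_mem_closedBall {r : ℝ} {c : ℂ} (hc : c.re ∈ Icc 0 1) {w : ℂ}
    (hw : w ∈ closedBall c (r / 2 - |c.im|)) :
    w.re ∈ Icc (-(r / 2)) (1 + r / 2) ∧ |w.im| ≤ r / 2 := by
  rw [mem_closedBall, dist_eq] at hw
  have hre := (abs_re_le_norm (w - c)).trans hw
  have him := (abs_im_le_norm (w - c)).trans hw
  rw [sub_re, abs_le] at hre
  rw [sub_im] at him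
  have := abs_sub_abs_le_abs_sub w.im c.im
  refine ⟨⟨?_, ?_⟩, ?_⟩ <;> linarith [abs_nonneg c.im, hc.1, hc.2]

section VerticalSegment

variable {F : ℂ → ℂ} {r M lam x : ℝ}

lemma ofReal_add_ofReal_mul_I_mem_strip (x : ℝ) {t : ℝ} (ht : |t| < r) :
    (x + t * I : ℂ) ∈ strip r := by
  simpa [mem_strip] using ht

lemma hasDerivAt_im_apply_vertical (hF : DifferentiableOn ℂ F (strip r)) {t : ℝ} (ht : |t| < r) :
    HasDerivAt (fun s : ℝ => (F (x + s * I)).im) (deriv F (x + t * I)).re t := by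
  have hFt := (hF.differentiableAt ((isOpen_strip r).mem_nhds
    (ofReal_add_ofReal_mul_I_mem_strip x ht))).hasDerivAt.comp_add_ofReal_mul_I
  simpa [Function.comp_def] using imCLM.hasFDerivAt.comp_hasDerivAt t hFt

lemma hasDerivAt_re_deriv_vertical (hF : DifferentiableOn ℂ F (strip r)) {t : ℝ} (ht : |t| < r) :
    HasDerivAt (fun s : ℝ => (deriv F (x + s * I)).re) (-(deriv (deriv F) (x + t * I)).im) t := by
  have hF' : DifferentiableOn ℂ (deriv F) (strip r) :=
    (hF.analyticOnNhd (isOpen_strip r)).deriv.differentiableOn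
  have hFt := (hF'.differentiableAt ((isOpen_strip r).mem_nhds
    (ofReal_add_ofReal_mul_I_mem_strip x ht))).hasDerivAt.comp_add_ofReal_mul_I
  simpa [Function.comp_def] using reCLM.hasFDerivAt.comp_hasDerivAt t hFt

variable (hF : DifferentiableOn ℂ F (strip r))
  (hM : ∀ w : ℂ, w.re ∈ Icc (-(r / 2)) (1 + r / 2) → |w.im| ≤ r / 2 → ‖F w‖ ≤ M)
include hF hM

lemma norm_deriv_deriv_le {c : ℂ} (hc : c.re ∈ Icc 0 1) (hc' : |c.im| < r / 2) :
    ‖deriv (deriv F) c‖ ≤ 2 * M / (r / 2 - |c.im|) ^ 2 := by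
  have hbox := fun {w} (hw : w ∈ closedBall c (r / 2 - |c.im|)) =>
    re_mem_Icc_and_abs_im_le_of_mem_closedBall hc hw
  have hball : closedBall c (r / 2 - |c.im|) ⊆ strip r := fun w hw => by
    have := (hbox hw).2
    rw [mem_strip]
    linarith [abs_nonneg c.im]
  exact norm_deriv_deriv_le_of_forall_mem_sphere_norm_le (by linarith) (hF.mono hball)
    fun w hw => hM w (hbox (sphere_subset_closedBall hw)).1 (hbox (sphere_subset_closedBall hw)).2

lemma sub_le_re_deriv (hM0 : 0 ≤ M) (hr : 0 < r) (hx : x ∈ Icc 0 1)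
    (hlam : lam ≤ (deriv F x).re) {t : ℝ} (ht : t ∈ Icc 0 (r / 4)) :
    lam - 16 * M * t / r ^ 2 ≤ (deriv F (x + t * I)).re := by
  have hpos : ∀ s ∈ Icc 0 (r / 4), 0 < r / 2 - s := fun s hs => by linarith [hs.2]
  -- `φ` integrates the Cauchy bound `‖F''(x + s * I)‖ ≤ 2 * M / (r / 2 - s) ^ 2` from `0`.
  set φ : ℝ → ℝ := fun s => lam + 4 * M / r - 2 * M * (r / 2 - s)⁻¹
  have hφ : ∀ s ∈ Icc 0 (r / 4), HasDerivAt φ (-(2 * M / (r / 2 - s) ^ 2)) s := fun s hs => by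
    refine (((((hasDerivAt_id s).const_sub (r / 2)).inv (hpos s hs).ne').const_mul
      (2 * M)).const_sub (lam + 4 * M / r)).congr_deriv ?_
    simp only [id]
    ring
  have hφ0 : φ 0 = lam := by
    simp only [φ, sub_zero]
    field_simp
    ring
  have hbound : ∀ s ∈ Ico 0 (r / 4),
      -(2 * M / (r / 2 - s) ^ 2) ≤ -(deriv (deriv F) (x + s * I)).im := fun s hs => by
    have hs_im : |(x + s * I : ℂ).im| = s := by simp [abs_of_nonneg hs.1]
    have h2 := norm_deriv_deriv_le hF hM (c := x + s * I) (by simpa using hx)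
      (by rw [hs_im]; linarith [hs.2])
    rw [hs_im] at h2
    linarith [le_abs_self (deriv (deriv F) (x + s * I)).im,
      abs_im_le_norm (deriv (deriv F) (x + s * I))]
  have hcmp := le_of_hasDerivAt_le_of_le hφ
    (fun s hs => hasDerivAt_re_deriv_vertical (x := x) hF
      (by rw [abs_of_nonneg hs.1]; linarith [hs.2]))
    (by simpa [hφ0] using hlam) hbound t ht
  have hφt : 2 * M / (r / 2 - t) - 4 * M / r ≤ 16 * M * t / r ^ 2 := by
    rw [div_sub_div _ _ (hpos t ht).ne' hr.ne',
      div_le_div_iff₀ (by nlinarith [hpos t ht]) (by positivity)]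
    nlinarith [mul_nonneg (mul_nonneg (mul_nonneg hM0 ht.1) hr.le)
      (by linarith [ht.2] : 0 ≤ r - 4 * t)]
  simp only [φ, ← div_eq_mul_inv] at hcmp
  linarith

lemma sub_le_im_apply (hM0 : 0 ≤ M) (hr : 0 < r) (hx : x ∈ Icc 0 1)
    (hlam : lam ≤ (deriv F x).re) (hreal : (F x).im = 0) {y : ℝ} (hy : y ∈ Icc 0 (r / 4)) :
    lam * y - 8 * M * y ^ 2 / r ^ 2 ≤ (F (x + y * I)).im :=
  le_of_hasDerivAt_le_of_le (f := fun s => lam * s - 8 * M * s ^ 2 / r ^ 2)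
    (fun s _ => ((((hasDerivAt_id s).const_mul lam).sub
      (((hasDerivAt_pow 2 s).const_mul (8 * M)).div_const (r ^ 2))).congr_deriv
        (by simp only [mul_one, Nat.cast_ofNat, Nat.add_one_sub_one, pow_one]; ring)))
    (fun s hs => hasDerivAt_im_apply_vertical hF
      (by rw [abs_of_nonneg hs.1]; linarith [hs.2]))
    (by simpa using hreal.ge)
    (fun s hs => sub_le_re_deriv hF hM hM0 hr hx hlam (Ico_subset_Icc_self hs)) y hy

end VerticalSegment

lemma im_apply_conj {F : ℂ → ℂ} {r : ℝ} (hr : 0 < r) (hF : DifferentiableOn ℂ F (strip r))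
    (hreal : ∀ x : ℝ, (F x).im = 0) {z : ℂ} (hz : z ∈ strip r) :
    (F (conj z)).im = -(F z).im := by
  have h := eqOn_conj_comp_conj_of_im_eq_zero (isOpen_strip r) (convex_strip r).isPreconnected
    (fun w hw => conj_mem_strip.2 hw) (x₀ := 0) (by simpa [mem_strip] using hr) hF
    (fun x _ => hreal x) (conj_mem_strip.2 hz)
  simp only [Function.comp_apply, conj_conj] at h
  rw [← h, conj_im]

lemma mul_im_le_im_apply {F : ℂ → ℂ} {r M lam lam' : ℝ} (hF : DifferentiableOn ℂ F (strip r))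
    (hM : ∀ w : ℂ, w.re ∈ Icc (-(r / 2)) (1 + r / 2) → |w.im| ≤ r / 2 → ‖F w‖ ≤ M)
    (hMpos : 0 < M) (hr : 0 < r) (hreal : ∀ x : ℝ, (F x).im = 0)
    (hlam : ∀ x : ℝ, lam ≤ (deriv F x).re) (hper : ∀ z ∈ strip r, (F (z + 1)).im = (F z).im)
    {z : ℂ} (h0 : 0 ≤ z.im) (hz : z.im < min (r / 4) (r ^ 2 * (lam - lam') / (8 * M))) :
    lam' * z.im ≤ (F z).im := by
  have hz4 : z.im < r / 4 := hz.trans_le (min_le_left _ _)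
  have hzM : z.im * (8 * M) < r ^ 2 * (lam - lam') :=
    (lt_div_iff₀ (by positivity)).1 (hz.trans_le (min_le_right _ _))
  have hw : z - ⌊z.re⌋ = ↑(Int.fract z.re) + ↑z.im * I := by
    apply Complex.ext <;> simp [Int.self_sub_floor]
  have hw_strip : z - ⌊z.re⌋ ∈ strip r := by
    simpa [mem_strip, abs_of_nonneg h0] using hz4.trans (by linarith)
  have hshift := apply_add_intCast_eq (g := fun w => (F w).im) hper ⌊z.re⌋ hw_strip
  rw [sub_add_cancel] at hshift
  rw [hshift, hw]
  calc lam' * z.im ≤ lam * z.im - 8 * M * z.im ^ 2 / r ^ 2 := by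
        rw [le_sub_iff_add_le', ← le_sub_iff_add_le, ← sub_mul, div_le_iff₀ (by positivity)]
        nlinarith
    _ ≤ _ := sub_le_im_apply hF hM hMpos.le hr ⟨Int.fract_nonneg _, (Int.fract_lt_one _).le⟩
        (hlam _) (hreal _) ⟨h0, hz4.le⟩

theorem stmt_0_general (r lam lam' M : ℝ) (D : ℤ) (F : ℂ → ℂ)
    (hr : 0 < r)
    (hF_holo : DifferentiableOn ℂ F {z : ℂ | |z.im| < r})
    (hF_real : ∀ x : ℝ, (F x).im = 0)
    (hF_per : ∀ z ∈ {z : ℂ | |z.im| < r}, F (z + 1) = F z + D)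
    (hF_deriv : ∀ x : ℝ, lam ≤ (deriv F x).re)
    (hM : IsLUB {y : ℝ | ∃ z : ℂ, z.re ∈ Set.Icc (-(r/2)) (1 + r/2) ∧
      |z.im| ≤ r/2 ∧ y = ‖F z‖} M)
    (hMpos : 0 < M) :
    ∀ z : ℂ, |z.im| < min (r/4) (r^2 * (lam - lam') / (8*M)) →
      lam' * |z.im| ≤ |(F z).im| := by
  have hbox : ∀ w : ℂ, w.re ∈ Icc (-(r / 2)) (1 + r / 2) → |w.im| ≤ r / 2 → ‖F w‖ ≤ M :=
    fun w hre him => hM.1 ⟨w, hre, him, rfl⟩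
  have hper : ∀ z ∈ strip r, (F (z + 1)).im = (F z).im := fun z hz => by simp [hF_per z hz]
  have hupper := @mul_im_le_im_apply F r M lam lam' hF_holo hbox hMpos hr hF_real hF_deriv hper
  intro z hz
  rcases le_total 0 z.im with h0 | h0
  · rw [abs_of_nonneg h0] at hz ⊢
    exact (hupper h0 hz).trans (le_abs_self _)
  · have hz_strip : z ∈ strip r := by
      rw [mem_strip]; linarith [hz.trans_le (min_le_left _ _)]
    have hconj := hupper (z := conj z) (by simpa using h0) (by simpa [abs_of_nonpos h0] using hz)
    rw [im_apply_conj hr hF_holo hF_real hz_strip, conj_im] at hconj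
    rw [abs_of_nonpos h0]
    linarith [neg_le_abs (F z).im]

/-- Let `0 < λ' < λ`. Then for every `z ∈ ℂ` with
`|Im z| < min(r/4, r²(λ−λ')/(8M))` one has `|Im F(z)| ≥ λ' |Im z|`.
Here `F` is the lift of an analytic expanding circle map, holomorphic on the strip
`S_r`, mapping `ℝ` to `ℝ`, with `F(z+1) = F(z) + D` and `F'(x) ≥ λ` on `ℝ`, and
`M = sup {|F(z)| : Re z ∈ [−r/2, 1+r/2], |Im z| ≤ r/2}` is a finite positive real. -/
theorem stmt_0 (r lam lam' M : ℝ) (D : ℤ) (F : ℂ → ℂ)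
    (hr : 0 < r)
    (hlam' : 0 < lam') (hlamlt : lam' < lam)
    (hF_holo : DifferentiableOn ℂ F {z : ℂ | |z.im| < r})
    (hF_real : ∀ x : ℝ, (F x).im = 0)
    (hF_per : ∀ z ∈ {z : ℂ | |z.im| < r}, F (z + 1) = F z + D)
    (hF_deriv : ∀ x : ℝ, lam ≤ (deriv F x).re)
    (hM : IsLUB {y : ℝ | ∃ z : ℂ, z.re ∈ Set.Icc (-(r/2)) (1 + r/2) ∧
      |z.im| ≤ r/2 ∧ y = ‖F z‖} M)
    (hMpos : 0 < M) :
    ∀ z : ℂ, |z.im| < min (r/4) (r^2 * (lam - lam') / (8*M)) →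
      lam' * |z.im| ≤ |(F z).im| :=
  stmt_0_general r lam lam' M D F hr hF_holo hF_real hF_per hF_deriv hM hMpos
end

section
/- Let ρ > 0, let Ω ⊆ ℂ be open with closure(𝔸_ρ) ⊆ Ω, and let g : Ω → ℂ be holomorphic with g'(z) ≠ 0 for all z ∈ Ω. Assume g(S¹) ⊆ S¹, that {z ∈ 𝔸_ρ : g(z) ∈ S¹} = S¹, and that there is an integer D ≥ 1 such that for every w ∈ 𝔸_ρ the fiber {z ∈ 𝔸_ρ : g(z) = w} has exactly D elements. Then, setting W = 𝔸_ρ ∩ g⁻¹(𝔸_ρ), the restriction of g to a map from W onto 𝔸_ρ is a covering map (with D sheets), and W is path-connected. -/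
/-!
Since `g' ≠ 0`, the restriction `F : W → 𝔸_ρ` of `g` is a local homeomorphism whose fibers all
have `D` points. Over a point near `w`, `F` already has `D` preimages close to the `D` points over
`w`, hence no others: `F` is a closed map, and so a finite covering. Being open and closed onto the
connected annulus, `F` sends a clopen subset of `W` onto `∅` or onto all of `𝔸_ρ`. A clopen subset
of `W` meeting the unit circle contains it (the circle is connected and lies in `W`), hence the
whole fiber over `1`; its complement then maps onto `∅` and is empty. So the open set `W` is
connected, hence path-connected.
-/

open Set Filter Topology

section FiberCounting

variable {E X : Type*} [TopologicalSpace E] [TopologicalSpace X] {f : E → X}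

theorem IsOpenMap.isClosedMap_of_ncard_preimage_singleton [T2Space E] (hf : IsOpenMap f)
    {n : ℕ} (hn : n ≠ 0) (hfib : ∀ x, (f ⁻¹' {x}).ncard = n) : IsClosedMap f := by
  have hfin (x : X) : (f ⁻¹' {x}).Finite := finite_of_ncard_ne_zero (by rwa [hfib])
  refine isClosedMap_iff_comap_nhds_le.2 fun {x} N hN => ?_
  obtain ⟨O, hO, hfibO, hON⟩ := mem_nhdsSet_iff_exists.1 hN
  obtain ⟨U, hU, hUdisj⟩ := (hfin x).t2_separation
  refine mem_comap.2 ⟨⋂ e ∈ f ⁻¹' {x}, f '' (U e ∩ O), ?_, fun y hy => hON ?_⟩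
  · refine ((hfin x).isOpen_biInter fun e _ => hf _ ((hU e).2.inter hO)).mem_nhds ?_
    exact mem_iInter₂.2 fun e he => ⟨e, ⟨(hU e).1, hfibO he⟩, he⟩
  · choose! q hqUO hq using fun e he => mem_iInter₂.1 hy e he
    have hinj : InjOn q (f ⁻¹' {x}) := fun e he e' he' hqq => by_contra fun hne =>
      disjoint_left.1 (hUdisj he he' hne) (hqUO e he).1 (hqq ▸ (hqUO e' he').1)
    -- `q` picks one preimage of `f y` near each point of the fiber over `x`; there are `n` of
    -- them, so these are all preimages of `f y`, and `y` is one of them.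
    have hall : q '' (f ⁻¹' {x}) = f ⁻¹' {f y} :=
      eq_of_subset_of_ncard_le (image_subset_iff.2 fun e he => hq e he)
        (by rw [hinj.ncard_image, hfib, hfib]) (hfin _)
    obtain ⟨e, he, rfl⟩ : y ∈ q '' (f ⁻¹' {x}) := hall ▸ rfl
    exact (hqUO e he).2

theorem IsLocalHomeomorph.isCoveringMap_of_ncard_preimage_singleton [T2Space E]
    (hf : IsLocalHomeomorph f) {n : ℕ} (hn : n ≠ 0) (hfib : ∀ x, (f ⁻¹' {x}).ncard = n) :
    IsCoveringMap f :=
  isCoveringMap_iff_isCoveringMapOn_univ.2 <|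
    (hf.isOpenMap.isClosedMap_of_ncard_preimage_singleton hn hfib)
      |>.isCoveringMapOn_of_isLocalHomeomorphOn
        (fun x _ => finite_of_ncard_ne_zero (by rwa [hfib])) hf.isLocalHomeomorphOn

theorem IsOpenMap.preconnectedSpace_of_isClosedMap [PreconnectedSpace X] (hfo : IsOpenMap f)
    (hfc : IsClosedMap f) {K : Set E} (hK : IsPreconnected K) {x : X} (hxK : f ⁻¹' {x} ⊆ K) :
    PreconnectedSpace E := by
  have eq_empty {S : Set E} (hS : IsClopen S) (hxS : x ∉ f '' S) : S = ∅ :=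
    image_eq_empty.1 <| (isClopen_iff.1 ⟨hfc S hS.1, hfo S hS.2⟩).resolve_right
      fun h => hxS (h ▸ mem_univ x)
  refine preconnectedSpace_iff_clopen.2 fun S hS => ?_
  by_cases hKS : (K ∩ S).Nonempty
  · refine Or.inr (compl_empty_iff.1 (eq_empty hS.compl ?_))
    rintro ⟨e, he, rfl⟩
    exact he (hK.subset_isClopen hS hKS (hxK rfl))
  · refine Or.inl (eq_empty hS ?_)
    rintro ⟨e, he, rfl⟩
    exact hKS ⟨e, hxK rfl, he⟩

theorem IsLocalHomeomorphOn.isLocalHomeomorph_mapsToRestrict {s : Set E} {t : Set X}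
    (hf : IsLocalHomeomorphOn f s) (hs : IsOpen s) (ht : IsOpen t) (hst : MapsTo f s t) :
    IsLocalHomeomorph (hst.restrict f s t) :=
  IsLocalHomeomorph.of_comp
    (isLocalHomeomorph_iff_isLocalHomeomorphOn_univ.2 <|
      hf.comp hs.isOpenEmbedding_subtypeVal.isLocalHomeomorph.isLocalHomeomorphOn
        fun z _ => z.2)
    ht.isOpenEmbedding_subtypeVal.isLocalHomeomorph
    (hf.continuousOn.mapsToRestrict hst)

end FiberCounting

theorem Set.MapsTo.ncard_restrict_preimage_singleton {α β : Type*} {f : α → β} {s : Set α}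
    {t : Set β} (hst : MapsTo f s t) (y : t) :
    (hst.restrict f s t ⁻¹' {y}).ncard = {x ∈ s | f x = y}.ncard := by
  rw [← Subtype.val_injective.injOn.ncard_image]
  congr 1
  ext x
  simp [Subtype.ext_iff, and_comm]

theorem Set.sep_inter_preimage_eq {α β : Type*} {f : α → β} {s : Set α} {t : Set β} {y : β}
    (hy : y ∈ t) : {x ∈ s ∩ f ⁻¹' t | f x = y} = {x ∈ s | f x = y} := by
  ext x
  exact ⟨fun h => ⟨h.1.1, h.2⟩, fun h => ⟨⟨h.1, show f x ∈ t from h.2 ▸ hy⟩, h.2⟩⟩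

theorem isLocalHomeomorphOn_of_deriv_ne_zero {g : ℂ → ℂ} {Ω : Set ℂ}
    (hΩ : IsOpen Ω) (hg : DifferentiableOn ℂ g Ω) (hg' : ∀ z ∈ Ω, deriv g z ≠ 0) :
    IsLocalHomeomorphOn g Ω := fun z hz =>
  have hstrict :=
    (hg.analyticAt (hΩ.mem_nhds hz)).hasStrictDerivAt.hasStrictFDerivAt_equiv (hg' z hz)
  ⟨_, hstrict.mem_toOpenPartialHomeomorph_source, by simp⟩

theorem isPreconnected_setOf_norm_mem_Ioo {E : Type*} [NormedAddCommGroup E] [NormedSpace ℝ E]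
    (hE : 1 < Module.rank ℝ E) {r : ℝ} (hr : 0 ≤ r) (R : ℝ) :
    IsPreconnected {z : E | ‖z‖ ∈ Ioo r R} := by
  have hpolar : {z : E | ‖z‖ ∈ Ioo r R} =
      (fun p : ℝ × E => p.1 • p.2) '' Ioo r R ×ˢ Metric.sphere 0 1 := by
    ext z
    constructor
    · intro hz
      have hz0 : ‖z‖ ≠ 0 := (hr.trans_lt hz.1).ne'
      refine ⟨(‖z‖, ‖z‖⁻¹ • z), ⟨hz, ?_⟩, ?_⟩
      · simp [norm_smul, hz0]
      · simp [smul_smul, hz0]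
    · rintro ⟨⟨t, u⟩, ⟨ht, hu⟩, rfl⟩
      have : ‖u‖ = 1 := by simpa using hu
      simpa [norm_smul, this, abs_of_pos (hr.trans_lt ht.1)] using ht
  rw [hpolar]
  exact (isPreconnected_Ioo.prod (isPreconnected_sphere hE 0 1)).image _
    continuous_smul.continuousOn

theorem one_mem_Ioo_exp_neg_exp {c : ℝ} (hc : 0 < c) :
    (1 : ℝ) ∈ Ioo (Real.exp (-c)) (Real.exp c) :=
  ⟨Real.exp_lt_one_iff.2 (neg_neg_of_pos hc), Real.one_lt_exp_iff.2 hc⟩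

/-- Annulus model of an analytic expanding circle map. With
`𝔸_ρ = {z : e^{−2πρ} < |z| < e^{2πρ}}`, `g` holomorphic with nonvanishing derivative
on a neighborhood `Ω` of the closed annulus, preserving the unit circle, whose only
points of the annulus mapped to the circle are circle points, and with all fibers over
the annulus of cardinality `D ≥ 1`: then `g` restricted to `W = 𝔸_ρ ∩ g⁻¹(𝔸_ρ)` is a
`D`-sheeted covering map onto `𝔸_ρ`, and `W` is path-connected. -/
theorem stmt_2 (ρ : ℝ) (hρ : 0 < ρ) (Ω : Set ℂ) (hΩ : IsOpen Ω)
    (g : ℂ → ℂ) (D : ℕ) (hD : 1 ≤ D)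
    (A : Set ℂ)
    (hA : A = {z : ℂ | Real.exp (-(2*Real.pi*ρ)) < ‖z‖ ∧
      ‖z‖ < Real.exp (2*Real.pi*ρ)})
    (hcl : closure A ⊆ Ω)
    (hg : DifferentiableOn ℂ g Ω)
    (hg' : ∀ z ∈ Ω, deriv g z ≠ 0)
    (hgS : ∀ z : ℂ, ‖z‖ = 1 → ‖g z‖ = 1)
    (hcircle : {z ∈ A | ‖g z‖ = 1} = {z : ℂ | ‖z‖ = 1})
    (hfib : ∀ w ∈ A, ({z ∈ A | g z = w}).ncard = D) :
    IsCoveringMap (fun z : (A ∩ g ⁻¹' A : Set ℂ) => (⟨g z.1, z.2.2⟩ : A)) ∧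
    (∀ w ∈ A, ({z ∈ A ∩ g ⁻¹' A | g z = w}).ncard = D) ∧
    IsPathConnected (A ∩ g ⁻¹' A) := by
  have hAopen : IsOpen A := hA ▸ isOpen_Ioo.preimage continuous_norm
  have hAΩ : A ⊆ Ω := subset_closure.trans hcl
  have hWopen : IsOpen (A ∩ g ⁻¹' A) :=
    (hg.continuousOn.mono hAΩ).isOpen_inter_preimage hAopen hAopen
  have hcircA : {z : ℂ | ‖z‖ = 1} ⊆ A := fun z (hz : ‖z‖ = 1) => by
    rw [hA]
    exact (hz ▸ one_mem_Ioo_exp_neg_exp (c := 2 * Real.pi * ρ) (by positivity) :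
      ‖z‖ ∈ Ioo _ _)
  have hmaps : MapsTo g (A ∩ g ⁻¹' A) A := fun z hz => hz.2
  have hF : IsLocalHomeomorph (hmaps.restrict g _ A) :=
    ((isLocalHomeomorphOn_of_deriv_ne_zero hΩ hg hg').mono (inter_subset_left.trans hAΩ)
      |>.isLocalHomeomorph_mapsToRestrict hWopen hAopen hmaps)
  have hFfib (w : A) : (hmaps.restrict g _ A ⁻¹' {w}).ncard = D := by
    rw [hmaps.ncard_restrict_preimage_singleton, sep_inter_preimage_eq w.2, hfib w w.2]
  refine ⟨hF.isCoveringMap_of_ncard_preimage_singleton (by omega) hFfib,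
    fun w hw => by rw [sep_inter_preimage_eq hw, hfib w hw], ?_⟩
  have hrank : 1 < Module.rank ℝ ℂ := by simp [Complex.rank_real_complex]
  have : PreconnectedSpace A := isPreconnected_iff_preconnectedSpace.1 <|
    hA ▸ isPreconnected_setOf_norm_mem_Ioo hrank (Real.exp_pos _).le _
  have hcircW : {z : ℂ | ‖z‖ = 1} ⊆ A ∩ g ⁻¹' A := fun z hz =>
    ⟨hcircA hz, hcircA (hgS z hz)⟩
  have hcirc : IsPathConnected {z : ℂ | ‖z‖ = 1} := by
    simpa [Metric.sphere] using isPathConnected_sphere hrank (0 : ℂ) zero_le_one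
  have hfiber_one : hmaps.restrict g _ A ⁻¹' {⟨1, hcircA (by simp)⟩} ⊆
      Subtype.val ⁻¹' {z : ℂ | ‖z‖ = 1} := fun z hz => by
    have hgz : g z = 1 := congrArg Subtype.val hz
    rw [mem_preimage, ← hcircle]
    exact ⟨z.2.1, by simp [hgz]⟩
  have : PreconnectedSpace ↥(A ∩ g ⁻¹' A) :=
    hF.isOpenMap.preconnectedSpace_of_isClosedMap
      (hF.isOpenMap.isClosedMap_of_ncard_preimage_singleton (by omega) hFfib)
      (hcirc.preimage_coe hcircW).isConnected.isPreconnected hfiber_one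
  rw [← hWopen.isConnected_iff_isPathConnected, isConnected_iff_connectedSpace]
  exact { toNonempty := ⟨⟨1, hcircW (by simp)⟩⟩ }
end

section
/- Let E and F be complex Banach spaces, let N ≥ 1, let Ω be an open subset of ℂᴺ, and let L : Ω → B(E,F) be a continuous map into the space of bounded linear operators from E to F equipped with the operator norm. Suppose there is a set T of continuous linear functionals on F which separates the points of F and such that for every e ∈ E and every φ ∈ T the scalar-valued function z ↦ φ(L(z)e) is holomorphic on Ω. Then L is holomorphic (Fréchet ℂ-differentiable) on Ω as a B(E,F)-valued map. -/
/-!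
A continuous function on a disc whose images under a separating family of functionals are
holomorphic coincides with its Cauchy integral, because the scalar Cauchy formula shows that every
functional of the family takes the same value on both; so such a function is holomorphic. Applied on
complex lines, this makes `L` holomorphic along every line through a point `z`, and the Schwarz
lemma bounds the line derivative and the second order remainder uniformly in the direction, in
terms of a local bound of `L`. The line derivative at `z` is linear since each functional of the
family maps it to the Fréchet derivative of a scalar holomorphic function, so it is the Fréchet
derivative of `L`. The family used for `B(E,F)` is `A ↦ φ (A e)` with `e ∈ E` and `φ ∈ T`.
-/

open Metric Set Filter Topology Asymptotics Complex
open scoped NNReal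

section WeakToStrong

variable {V G H : Type*} [NormedAddCommGroup V] [NormedSpace ℂ V]
  [NormedAddCommGroup G] [NormedSpace ℂ G] [NormedAddCommGroup H] [NormedSpace ℂ H]
  {S : Set (G →L[ℂ] ℂ)}

theorem eq_of_forall_mem_apply_eq (hS : ∀ y : G, y ≠ 0 → ∃ ψ ∈ S, ψ y ≠ 0) {x y : G}
    (h : ∀ ψ ∈ S, ψ x = ψ y) : x = y := by
  by_contra hne
  obtain ⟨ψ, hψ, hψxy⟩ := hS (x - y) (sub_ne_zero.2 hne)
  exact hψxy (by rw [map_sub, h ψ hψ, sub_self])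

theorem ContinuousLinearMap.circleIntegral_comp_comm [CompleteSpace G] [CompleteSpace H]
    (ψ : G →L[ℂ] H) {f : ℂ → G} {c : ℂ} {R : ℝ} (hf : CircleIntegrable f c R) :
    (∮ z in C(c, R), ψ (f z)) = ψ (∮ z in C(c, R), f z) := by
  rw [circleIntegral, circleIntegral, ← ψ.intervalIntegral_comp_comm hf.out]
  simp only [map_smul]

theorem Complex.differentiableOn_ball_of_separating_comp [CompleteSpace G]
    (hS : ∀ y : G, y ≠ 0 → ∃ ψ ∈ S, ψ y ≠ 0) {f : ℂ → G} {c : ℂ} {r : ℝ} (hr : 0 < r)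
    (hf : ContinuousOn f (closedBall c r))
    (hfS : ∀ ψ ∈ S, DifferentiableOn ℂ (fun z => ψ (f z)) (ball c r)) :
    DifferentiableOn ℂ f (ball c r) := by
  lift r to ℝ≥0 using hr.le
  have hint : CircleIntegrable f c r := (hf.mono sphere_subset_closedBall).circleIntegrable r.2
  have hcauchy := (hasFPowerSeriesOn_cauchy_integral hint (by exact_mod_cast hr)).differentiableOn
  rw [eball_coe] at hcauchy
  refine hcauchy.congr fun w hw => eq_of_forall_mem_apply_eq hS fun ψ hψ => ?_
  have hψf : DiffContOnCl ℂ (fun z => ψ (f z)) (ball c r) :=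
    ⟨hfS ψ hψ, (ψ.continuous.comp_continuousOn hf).mono closure_ball_subset_closedBall⟩
  have hw_sphere : w ∉ sphere c |(r : ℝ)| := by
    rw [NNReal.abs_eq]; exact fun h => (mem_ball.1 hw).ne (mem_sphere.1 h)
  have hint_w : CircleIntegrable (fun z => (z - w)⁻¹ • f z) c r :=
    (circleIntegrable_sub_inv_iff.2 (Or.inr hw_sphere)).smul_continuousOn
      (by rw [NNReal.abs_eq]; exact hf.mono sphere_subset_closedBall)
  rw [← hψf.two_pi_i_inv_smul_circleIntegral_sub_inv_smul hw, map_smul,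
    ← ψ.circleIntegral_comp_comm hint_w]
  simp only [map_smul]

theorem Complex.differentiableOn_of_separating_comp [CompleteSpace G]
    (hS : ∀ y : G, y ≠ 0 → ∃ ψ ∈ S, ψ y ≠ 0) {f : ℂ → G} {U : Set ℂ} (hU : IsOpen U)
    (hf : ContinuousOn f U) (hfS : ∀ ψ ∈ S, DifferentiableOn ℂ (fun z => ψ (f z)) U) :
    DifferentiableOn ℂ f U := by
  intro c hc
  obtain ⟨r, hr, hrU⟩ := nhds_basis_closedBall.mem_iff.1 (hU.mem_nhds hc)
  have hball := differentiableOn_ball_of_separating_comp hS hr (hf.mono hrU)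
    fun ψ hψ => (hfS ψ hψ).mono (ball_subset_closedBall.trans hrU)
  exact (hball c (mem_ball_self hr)).differentiableAt (ball_mem_nhds c hr) |>.differentiableWithinAt

theorem norm_sub_sub_smul_deriv_le {g : ℂ → G} {c ζ : ℂ} {R M : ℝ}
    (hg : DifferentiableOn ℂ g (ball c R)) (hM : MapsTo g (ball c R) (closedBall (g c) M))
    (hζ : ζ ∈ ball c R) :
    ‖g ζ - g c - (ζ - c) • deriv g c‖ ≤ 2 * M * (‖ζ - c‖ / R) ^ 2 := by
  have hR : 0 < R := nonempty_ball.1 ⟨ζ, hζ⟩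
  have hderiv : ‖deriv g c‖ ≤ M / R := norm_deriv_le_div_of_mapsTo_ball hg hM hR
  set k : ℂ → G := fun w => g w - (w - c) • deriv g c
  have hk_sub : ∀ w, k w - k c = g w - g c - (w - c) • deriv g c := fun w => by
    simp only [k, sub_self, zero_smul, sub_zero]; exact sub_right_comm _ _ _
  have hk : DifferentiableOn ℂ k (ball c R) := hg.sub (by fun_prop)
  have hkM : MapsTo k (ball c R) (closedBall (k c) (2 * M)) := by
    intro w hw
    rw [mem_closedBall_iff_norm, hk_sub]
    calc ‖g w - g c - (w - c) • deriv g c‖ ≤ ‖g w - g c‖ + ‖w - c‖ * ‖deriv g c‖ :=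
          (norm_sub_le _ _).trans_eq (by rw [norm_smul])
      _ ≤ M + R * (M / R) := by
        gcongr
        · exact mem_closedBall_iff_norm.1 (hM hw)
        · exact (mem_ball_iff_norm.1 hw).le
      _ = 2 * M := by field_simp; ring
  -- `k` vanishes to second order at `c`, so the Schwarz lemma gains a second power.
  have hko : (k · - k c) =o[𝓝 c] fun w => ‖w - c‖ ^ 1 :=
    (hasDerivAt_iff_isLittleO.1 (hg.differentiableAt (ball_mem_nhds c hR)).hasDerivAt).norm_right
      |>.congr (fun w => (hk_sub w).symm) (fun w => (pow_one _).symm)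
  simpa [dist_eq_norm, hk_sub] using
    dist_le_mul_div_pow_of_mapsTo_ball_of_isLittleO hk hkM hko hζ

theorem mapsTo_ball_div_norm (z h : V) {R : ℝ} :
    MapsTo (fun ζ : ℂ => z + ζ • h) (ball 0 (R / ‖h‖)) (ball z R) := by
  intro ζ hζ
  rcases eq_or_ne h 0 with rfl | hh
  · simp at hζ
  rw [mem_ball_zero_iff, lt_div_iff₀ (norm_pos_iff.2 hh)] at hζ
  simpa [norm_smul] using hζ

theorem norm_lineDeriv_le {f : V → G} {z h : V} {R M : ℝ} (hR : 0 < R)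
    (hf : DifferentiableOn ℂ (fun ζ : ℂ => f (z + ζ • h)) (ball 0 (R / ‖h‖)))
    (hM : MapsTo f (ball z R) (closedBall (f z) M)) :
    ‖lineDeriv ℂ f z h‖ ≤ M / R * ‖h‖ := by
  rcases eq_or_ne h 0 with rfl | hh
  · simp [lineDeriv_zero]
  have hslice : MapsTo (fun ζ : ℂ => f (z + ζ • h)) (ball 0 (R / ‖h‖))
      (closedBall (f (z + (0 : ℂ) • h)) M) := by
    rw [zero_smul, add_zero]; exact hM.comp (mapsTo_ball_div_norm z h)
  have := norm_deriv_le_div_of_mapsTo_ball hf hslice (by positivity)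
  rwa [div_div_eq_mul_div, mul_div_right_comm] at this

theorem norm_sub_sub_lineDeriv_le {f : V → G} {z h : V} {R M : ℝ}
    (hf : DifferentiableOn ℂ (fun ζ : ℂ => f (z + ζ • h)) (ball 0 (R / ‖h‖)))
    (hM : MapsTo f (ball z R) (closedBall (f z) M)) (hh : ‖h‖ < R) :
    ‖f (z + h) - f z - lineDeriv ℂ f z h‖ ≤ 2 * M / R ^ 2 * ‖h‖ ^ 2 := by
  rcases eq_or_ne h 0 with rfl | hh0
  · simp [lineDeriv_zero]
  have hslice : MapsTo (fun ζ : ℂ => f (z + ζ • h)) (ball 0 (R / ‖h‖))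
      (closedBall (f (z + (0 : ℂ) • h)) M) := by
    rw [zero_smul, add_zero]; exact hM.comp (mapsTo_ball_div_norm z h)
  have hone : (1 : ℂ) ∈ ball 0 (R / ‖h‖) := by
    rwa [mem_ball_zero_iff, norm_one, one_lt_div (norm_pos_iff.2 hh0)]
  have := norm_sub_sub_smul_deriv_le hf hslice hone
  simp only [one_smul, zero_smul, add_zero, sub_zero, norm_one] at this
  refine this.trans_eq ?_
  rw [one_div_div, div_pow]
  ring

theorem differentiableAt_of_separating_comp (hS : ∀ y : G, y ≠ 0 → ∃ ψ ∈ S, ψ y ≠ 0)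
    {f : V → G} {z : V} {R M : ℝ} (hR : 0 < R)
    (hf : ∀ h : V, DifferentiableOn ℂ (fun ζ : ℂ => f (z + ζ • h)) (ball 0 (R / ‖h‖)))
    (hM : MapsTo f (ball z R) (closedBall (f z) M))
    (hfS : ∀ ψ ∈ S, DifferentiableAt ℂ (fun w => ψ (f w)) z) :
    DifferentiableAt ℂ f z := by
  have hline : ∀ h, LineDifferentiableAt ℂ f z h := by
    intro h
    rcases eq_or_ne h 0 with rfl | hh
    · exact lineDifferentiableAt_zero
    have h0 : (0 : ℂ) ∈ ball 0 (R / ‖h‖) := mem_ball_self (by positivity)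
    exact (hf h 0 h0).differentiableAt (ball_mem_nhds _ (by positivity))
  have hψΛ : ∀ ψ ∈ S, ∀ h, ψ (lineDeriv ℂ f z h) = fderiv ℂ (fun w => ψ (f w)) z h := by
    intro ψ hψ h
    have hψline : HasLineDerivAt ℂ (fun w => ψ (f w)) (ψ (lineDeriv ℂ f z h)) z h :=
      ψ.hasFDerivAt.comp_hasDerivAt _ (hline h).hasLineDerivAt
    rw [← (hfS ψ hψ).lineDeriv_eq_fderiv, hψline.lineDeriv]
  let Λ : V →ₗ[ℂ] G :=
    { toFun := lineDeriv ℂ f z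
      map_add' := fun h k => eq_of_forall_mem_apply_eq hS fun ψ hψ => by
        simp only [map_add, hψΛ ψ hψ]
      map_smul' := fun _ _ => lineDeriv_smul }
  refine ⟨Λ.mkContinuous (M / R) fun h => norm_lineDeriv_le hR (hf h) hM, ?_⟩
  rw [hasFDerivAt_iff_isLittleO_nhds_zero]
  refine IsBigO.trans_isLittleO ?_ (isLittleO_norm_pow_id one_lt_two)
  refine IsBigO.of_bound (2 * M / R ^ 2) ?_
  filter_upwards [ball_mem_nhds (0 : V) hR] with h hh
  rw [norm_pow, norm_norm]
  exact norm_sub_sub_lineDeriv_le (hf h) hM (mem_ball_zero_iff.1 hh)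

theorem differentiableOn_of_separating_comp [CompleteSpace G]
    (hS : ∀ y : G, y ≠ 0 → ∃ ψ ∈ S, ψ y ≠ 0) {f : V → G} {U : Set V} (hU : IsOpen U)
    (hf : ContinuousOn f U) (hfS : ∀ ψ ∈ S, DifferentiableOn ℂ (fun z => ψ (f z)) U) :
    DifferentiableOn ℂ f U := by
  intro z hz
  obtain ⟨ε, hε, hεU⟩ := isOpen_iff.1 hU z hz
  obtain ⟨δ, hδ, hδf⟩ := Metric.continuousAt_iff.1 (hf.continuousAt (hU.mem_nhds hz)) 1 one_pos
  set R := min ε δ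
  have hRU : ball z R ⊆ U := (ball_subset_ball (min_le_left _ _)).trans hεU
  have hM : MapsTo f (ball z R) (closedBall (f z) 1) := fun w hw =>
    (hδf (lt_of_lt_of_le hw (min_le_right _ _))).le
  have hslice : ∀ h : V, DifferentiableOn ℂ (fun ζ : ℂ => f (z + ζ • h)) (ball 0 (R / ‖h‖)) := by
    intro h
    have hmaps := (mapsTo_ball_div_norm z h (R := R)).mono_right hRU
    refine Complex.differentiableOn_of_separating_comp hS isOpen_ball
      (hf.comp (by fun_prop) hmaps) fun ψ hψ => ?_
    exact (hfS ψ hψ).comp (f := fun ζ : ℂ => z + ζ • h) (by fun_prop) hmaps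
  refine (differentiableAt_of_separating_comp hS (lt_min hε hδ) hslice hM fun ψ hψ => ?_)
    |>.differentiableWithinAt
  exact (hfS ψ hψ z hz).differentiableAt (hU.mem_nhds hz)

end WeakToStrong

theorem stmt_4_general {E F : Type*} [NormedAddCommGroup E] [NormedSpace ℂ E]
    [NormedAddCommGroup F] [NormedSpace ℂ F] [CompleteSpace F]
    (N : ℕ) (Ω : Set (Fin N → ℂ)) (hΩ : IsOpen Ω)
    (L : (Fin N → ℂ) → E →L[ℂ] F)
    (hL_cont : ContinuousOn L Ω)
    (T : Set (F →L[ℂ] ℂ))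
    (hT_sep : ∀ y : F, y ≠ 0 → ∃ φ ∈ T, φ y ≠ 0)
    (hL_holo : ∀ e : E, ∀ φ ∈ T, DifferentiableOn ℂ (fun z => φ (L z e)) Ω) :
    DifferentiableOn ℂ L Ω := by
  set S : Set ((E →L[ℂ] F) →L[ℂ] ℂ) := {ψ | ∃ e : E, ∃ φ ∈ T, ψ = φ.comp (.apply ℂ F e)}
  refine differentiableOn_of_separating_comp (S := S) ?_ hΩ hL_cont ?_
  · intro A hA
    obtain ⟨e, he⟩ : ∃ e, A e ≠ 0 := by
      by_contra! h
      exact hA (ContinuousLinearMap.ext h)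
    obtain ⟨φ, hφ, hφA⟩ := hT_sep _ he
    exact ⟨_, ⟨e, φ, hφ, rfl⟩, hφA⟩
  · rintro _ ⟨e, φ, hφ, rfl⟩
    exact hL_holo e φ hφ

/-- Weak-to-strong holomorphy for operator-valued maps. If
`L : Ω → B(E,F)` is continuous on an open `Ω ⊆ ℂᴺ` and there is a point-separating
set `T` of continuous linear functionals on `F` such that `z ↦ φ(L(z)e)` is
holomorphic for every `e ∈ E`, `φ ∈ T`, then `L` is holomorphic on `Ω`. -/
theorem stmt_4 {E F : Type*} [NormedAddCommGroup E] [NormedSpace ℂ E] [CompleteSpace E]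
    [NormedAddCommGroup F] [NormedSpace ℂ F] [CompleteSpace F]
    (N : ℕ) (hN : 1 ≤ N) (Ω : Set (Fin N → ℂ)) (hΩ : IsOpen Ω)
    (L : (Fin N → ℂ) → E →L[ℂ] F)
    (hL_cont : ContinuousOn L Ω)
    (T : Set (F →L[ℂ] ℂ))
    (hT_sep : ∀ y : F, y ≠ 0 → ∃ φ ∈ T, φ y ≠ 0)
    (hL_holo : ∀ e : E, ∀ φ ∈ T, DifferentiableOn ℂ (fun z => φ (L z e)) Ω) :
    DifferentiableOn ℂ L Ω :=
  stmt_4_general N Ω hΩ L hL_cont T hT_sep hL_holo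
end

section
/- Let 0 < R'' < R and let f : closure(𝔸_R) → ℂ be continuous and holomorphic on 𝔸_R. For m ∈ ℤ put a_m = (1/2πi)∮_{|z|=1} f(z) z^{−m−1} dz. Then: (i) |a_m| ≤ ‖f‖_∞ e^{−2π|m|R} for every m ∈ ℤ, where ‖f‖_∞ = sup_{z ∈ closure(𝔸_R)} |f(z)|; (ii) consequently sup_{z ∈ closure(𝔸_{R''})} |a_m z^m| ≤ ‖f‖_∞ e^{−2π|m|(R−R'')} for every m ∈ ℤ; (iii) f(z) = Σ_{m∈ℤ} a_m z^m, the series converging absolutely for every z ∈ 𝔸_R. -/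
/-!
By Cauchy's theorem the circle integral defining `a_m` does not depend on the radius
`ρ ∈ (e^{-2πR}, e^{2πR})`, so the standard estimate on the circle of radius `ρ` gives
`|a_m| ≤ ‖f‖_∞ ρ^{-m}`; letting `ρ` tend to `e^{2πR}` (for `m ≥ 0`) or to `e^{-2πR}` (for `m < 0`)
gives (i), and (ii) follows since `|z^m| ≤ e^{2π|m|R''}` on `closure 𝔸_{R''}`. For (iii), on the
circle `|z| = r` the numbers `r^m a_m` are the Fourier coefficients of `θ ↦ f(r e^{iθ})`. The
bound of (ii) with `2πR'' = |log r| < 2πR` makes them absolutely summable, so this Fourier series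
converges to `f` at every point.
-/

/-- The open annulus `𝔸_ρ = {z ∈ ℂ : e^{−2πρ} < |z| < e^{2πρ}}`. -/
def ann (ρ : ℝ) : Set ℂ :=
  {z : ℂ | Real.exp (-(2*Real.pi*ρ)) < ‖z‖ ∧
    ‖z‖ < Real.exp (2*Real.pi*ρ)}

open Real Set Filter Topology Metric

noncomputable def laurentCoeff (f : ℂ → ℂ) (r : ℝ) (m : ℤ) : ℂ :=
  (2 * π * Complex.I)⁻¹ • ∮ z in C(0, r), f z * z ^ (-m - 1 : ℤ)

section Annulus

open Complex

variable {f : ℂ → ℂ} {r₁ r₂ : ℝ}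

theorem isOpen_setOf_norm_mem_Ioo (r₁ r₂ : ℝ) : IsOpen {z : ℂ | ‖z‖ ∈ Ioo r₁ r₂} :=
  isOpen_Ioo.preimage continuous_norm

theorem laurentCoeff_eq_of_differentiableOn (hr₁ : 0 ≤ r₁)
    (hf : DifferentiableOn ℂ f {z | ‖z‖ ∈ Ioo r₁ r₂}) {ρ ρ' : ℝ} (hρ : ρ ∈ Ioo r₁ r₂)
    (hρ' : ρ' ∈ Ioo r₁ r₂) (m : ℤ) : laurentCoeff f ρ m = laurentCoeff f ρ' m := by
  wlog hle : ρ ≤ ρ' generalizing ρ ρ'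
  · exact (this hρ' hρ (le_of_not_ge hle)).symm
  have hsub : closedBall (0 : ℂ) ρ' \ ball 0 ρ ⊆ {z | ‖z‖ ∈ Ioo r₁ r₂} := fun z hz => by
    simp only [Set.mem_sdiff, mem_closedBall, mem_ball, dist_zero_right, not_lt] at hz
    exact ⟨hρ.1.trans_le hz.2, hz.1.trans_lt hρ'.2⟩
  have hd : ∀ z ∈ {z : ℂ | ‖z‖ ∈ Ioo r₁ r₂},
      DifferentiableAt ℂ (fun z => f z * z ^ (-m - 1 : ℤ)) z := fun z hz =>
    (hf.differentiableAt ((isOpen_setOf_norm_mem_Ioo r₁ r₂).mem_nhds hz)).mul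
      (differentiableAt_zpow.mpr (Or.inl (norm_pos_iff.mp (hr₁.trans_lt hz.1))))
  unfold laurentCoeff
  rw [Complex.circleIntegral_eq_of_differentiable_on_annulus_off_countable (hr₁.trans_lt hρ.1)
    hle countable_empty (fun z hz => (hd z (hsub hz)).continuousAt.continuousWithinAt)
    (fun z hz => hd z (hsub (sdiff_subset_sdiff ball_subset_closedBall ball_subset_closedBall
      hz.1)))]

theorem norm_laurentCoeff_le {r C : ℝ} (hr : 0 < r) (hC : ∀ z ∈ sphere (0 : ℂ) r, ‖f z‖ ≤ C)
    (m : ℤ) : ‖laurentCoeff f r m‖ ≤ C * r ^ (-m) := by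
  have hbound : ∀ z ∈ sphere (0 : ℂ) r, ‖f z * z ^ (-m - 1 : ℤ)‖ ≤ C * r ^ (-m - 1) := by
    intro z hz
    rw [norm_mul, norm_zpow, mem_sphere_zero_iff_norm.mp hz]
    exact mul_le_mul_of_nonneg_right (hC z hz) (by positivity)
  calc ‖laurentCoeff f r m‖ ≤ (2 * π)⁻¹ * (2 * π * r * (C * r ^ (-m - 1))) := by
        rw [laurentCoeff, norm_smul, norm_inv]
        have h2πI : ‖(2 * π * I : ℂ)‖ = 2 * π := by simp [abs_of_pos pi_pos]
        rw [h2πI]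
        gcongr
        exact circleIntegral.norm_integral_le_of_norm_le_const hr.le hbound
    _ = C * r ^ (-m) := by
        rw [zpow_sub_one₀ hr.ne']
        field_simp

theorem norm_laurentCoeff_le_of_mem_Icc (hr₁ : 0 ≤ r₁)
    (hf : DifferentiableOn ℂ f {z | ‖z‖ ∈ Ioo r₁ r₂}) {C : ℝ}
    (hC : ∀ z ∈ {z : ℂ | ‖z‖ ∈ Ioo r₁ r₂}, ‖f z‖ ≤ C) {ρ : ℝ} (hρ : ρ ∈ Ioo r₁ r₂) (m : ℤ)
    {s : ℝ} (hs : s ∈ Icc r₁ r₂) (hs₀ : 0 < s) : ‖laurentCoeff f ρ m‖ ≤ C * s ^ (-m) := by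
  have hcl : s ∈ closure (Ioo r₁ r₂) := by
    rwa [closure_Ioo (hρ.1.trans hρ.2).ne]
  have := mem_closure_iff_nhdsWithin_neBot.mp hcl
  have hlim : Tendsto (fun t : ℝ => C * t ^ (-m)) (𝓝[Ioo r₁ r₂] s) (𝓝 (C * s ^ (-m))) :=
    ((continuousAt_zpow₀ s (-m) (Or.inl hs₀.ne')).tendsto.const_mul C).mono_left
      nhdsWithin_le_nhds
  refine ge_of_tendsto hlim (eventually_nhdsWithin_of_forall fun t ht => ?_)
  rw [laurentCoeff_eq_of_differentiableOn hr₁ hf hρ ht m]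
  exact norm_laurentCoeff_le (hr₁.trans_lt ht.1)
    (fun z hz => hC z (show ‖z‖ ∈ Ioo r₁ r₂ by rwa [mem_sphere_zero_iff_norm.mp hz])) m

end Annulus

section Fourier

open Complex

local instance : Fact (0 < 2 * π) := ⟨two_pi_pos⟩

theorem circleMap_zero_eq_mul_toCircle (r θ : ℝ) :
    circleMap 0 r θ = r * (AddCircle.toCircle (θ : AddCircle (2 * π)) : ℂ) := by
  rw [circleMap_zero, AddCircle.toCircle_apply_mk, Circle.coe_exp, div_self two_pi_pos.ne',
    one_mul]

theorem mul_toCircle_mem_sphere {r : ℝ} (hr : 0 ≤ r) (t : AddCircle (2 * π)) :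
    r * (AddCircle.toCircle t : ℂ) ∈ sphere (0 : ℂ) r := by
  simp [abs_of_nonneg hr, Circle.norm_coe]

noncomputable def circleRestrict (f : ℂ → ℂ) {r : ℝ} (hr : 0 ≤ r)
    (hf : ContinuousOn f (sphere 0 r)) : C(AddCircle (2 * π), ℂ) where
  toFun t := f (r * AddCircle.toCircle t)
  continuous_toFun := hf.comp_continuous (by fun_prop) (mul_toCircle_mem_sphere hr)

theorem fourierCoeff_circleRestrict {f : ℂ → ℂ} {r : ℝ} (hr : 0 < r)
    (hf : ContinuousOn f (sphere 0 r)) (n : ℤ) :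
    fourierCoeff (circleRestrict f hr.le hf) n = r ^ n * laurentCoeff f r n := by
  have hr₀ : (r : ℂ) ≠ 0 := ofReal_ne_zero.mpr hr.ne'
  have hintegrand : ∀ θ : ℝ,
      deriv (circleMap 0 r) θ • (f (circleMap 0 r θ) * circleMap 0 r θ ^ (-n - 1)) =
        (I * (r : ℂ) ^ (-n)) *
          (fourier (-n) (θ : AddCircle (2 * π)) • circleRestrict f hr.le hf θ) := by
    intro θ
    have hw : (AddCircle.toCircle (θ : AddCircle (2 * π)) : ℂ) ≠ 0 := Circle.coe_ne_zero _
    rw [deriv_circleMap, circleMap_zero_eq_mul_toCircle, fourier_apply, AddCircle.toCircle_zsmul]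
    simp only [circleRestrict, ContinuousMap.coe_mk, smul_eq_mul, Circle.coe_zpow]
    rw [zpow_sub_one₀ (mul_ne_zero hr₀ hw), mul_zpow]
    field_simp
  rw [fourierCoeff_eq_intervalIntegral _ n 0, zero_add, laurentCoeff, circleIntegral]
  simp_rw [hintegrand]
  rw [intervalIntegral.integral_const_mul, zpow_neg, Complex.real_smul, smul_eq_mul]
  push_cast
  field_simp

theorem hasSum_laurentCoeff_mul_zpow {f : ℂ → ℂ} {z : ℂ} (hz : z ≠ 0)
    (hf : ContinuousOn f (sphere 0 ‖z‖))
    (hsum : Summable fun m : ℤ => ‖laurentCoeff f ‖z‖ m * z ^ m‖) :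
    HasSum (fun m : ℤ => laurentCoeff f ‖z‖ m * z ^ m) (f z) := by
  set G := circleRestrict f (norm_nonneg z) hf
  set x : AddCircle (2 * π) := ↑(arg z)
  have hzx : (‖z‖ : ℂ) * AddCircle.toCircle x = z := by
    rw [← circleMap_zero_eq_mul_toCircle, circleMap_zero, norm_mul_exp_arg_mul_I]
  have hterm : ∀ m : ℤ, fourierCoeff G m • fourier m x = laurentCoeff f ‖z‖ m * z ^ m := by
    intro m
    rw [fourierCoeff_circleRestrict (norm_pos_iff.mpr hz), fourier_apply, AddCircle.toCircle_zsmul,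
      Circle.coe_zpow, smul_eq_mul]
    calc _ = laurentCoeff f ‖z‖ m * ((‖z‖ : ℂ) * AddCircle.toCircle x) ^ m := by rw [mul_zpow]; ring
      _ = _ := by rw [hzx]
  have hG : Summable (fourierCoeff G) :=
    .of_norm (hsum.congr fun m => by
      rw [fourierCoeff_circleRestrict (norm_pos_iff.mpr hz), norm_mul, norm_mul, norm_zpow,
        norm_zpow, norm_real, norm_norm, mul_comm])
  have hx : G x = f z := congrArg f hzx
  simpa only [hterm, hx] using has_pointwise_sum_fourier_series_of_summable hG x

end Fourier

theorem abs_log_lt_iff_mem_Ioo {x c : ℝ} (hx : 0 < x) :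
    |log x| < c ↔ x ∈ Ioo (exp (-c)) (exp c) := by
  rw [abs_lt, mem_Ioo, lt_log_iff_exp_lt hx, log_lt_iff_lt_exp hx]

theorem abs_log_le_iff_mem_Icc {x c : ℝ} (hx : 0 < x) :
    |log x| ≤ c ↔ x ∈ Icc (exp (-c)) (exp c) := by
  rw [abs_le, mem_Icc, le_log_iff_exp_le hx, log_le_iff_le_exp hx]

theorem one_mem_Ioo_exp {c : ℝ} (hc : 0 < c) : (1 : ℝ) ∈ Ioo (exp (-c)) (exp c) :=
  ⟨exp_lt_one_iff.mpr (neg_lt_zero.mpr hc), one_lt_exp_iff.mpr hc⟩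

theorem zpow_le_exp_abs_mul {x c : ℝ} (hx : 0 < x) (h : |log x| ≤ c) (m : ℤ) :
    x ^ m ≤ exp (|(m : ℝ)| * c) := by
  rw [← rpow_intCast, rpow_def_of_pos hx, exp_le_exp]
  calc log x * m ≤ |log x * m| := le_abs_self _
    _ = |(m : ℝ)| * |log x| := by rw [abs_mul, mul_comm]
    _ ≤ |(m : ℝ)| * c := by gcongr

theorem norm_mul_zpow_le {a z : ℂ} {C c d : ℝ} {m : ℤ} (ha : ‖a‖ ≤ C * exp (-(|(m : ℝ)| * c)))
    (hz : z ≠ 0) (hd : |log ‖z‖| ≤ d) : ‖a * z ^ m‖ ≤ C * exp (-(|(m : ℝ)| * (c - d))) :=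
  calc ‖a * z ^ m‖ = ‖a‖ * ‖z‖ ^ m := by rw [norm_mul, norm_zpow]
    _ ≤ C * exp (-(|(m : ℝ)| * c)) * exp (|(m : ℝ)| * d) :=
        mul_le_mul ha (zpow_le_exp_abs_mul (norm_pos_iff.mpr hz) hd m) (by positivity)
          ((norm_nonneg a).trans ha)
    _ = C * exp (-(|(m : ℝ)| * (c - d))) := by rw [mul_assoc, ← exp_add]; ring_nf

theorem summable_exp_neg_abs_mul {ε : ℝ} (hε : 0 < ε) :
    Summable fun m : ℤ => exp (-(|(m : ℝ)| * ε)) := by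
  have hgeom : Summable fun n : ℕ => exp (-ε) ^ n :=
    summable_geometric_of_lt_one (exp_pos _).le (exp_lt_one_iff.mpr (neg_lt_zero.mpr hε))
  refine summable_int_iff_summable_nat_and_neg.mpr
    ⟨hgeom.congr fun n => ?_, hgeom.congr fun n => ?_⟩ <;> simp [← exp_nat_mul]

theorem mem_ann_iff {ρ : ℝ} {z : ℂ} : z ∈ ann ρ ↔ z ≠ 0 ∧ |log ‖z‖| < 2 * π * ρ := by
  refine ⟨fun hz => ?_, fun ⟨hz, hlog⟩ => (abs_log_lt_iff_mem_Ioo (norm_pos_iff.mpr hz)).mp hlog⟩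
  have h₀ : 0 < ‖z‖ := (exp_pos _).trans hz.1
  exact ⟨norm_pos_iff.mp h₀, (abs_log_lt_iff_mem_Ioo h₀).mpr hz⟩

theorem closure_ann_subset (ρ : ℝ) :
    closure (ann ρ) ⊆ {z | z ≠ 0 ∧ |log ‖z‖| ≤ 2 * π * ρ} := by
  intro z hz
  have hsub : ann ρ ⊆ {w : ℂ | ‖w‖ ∈ Icc (exp (-(2 * π * ρ))) (exp (2 * π * ρ))} :=
    fun w hw => Ioo_subset_Icc_self hw
  have hIcc := closure_minimal hsub (isClosed_Icc.preimage continuous_norm) hz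
  have h₀ : 0 < ‖z‖ := (exp_pos _).trans_le hIcc.1
  exact ⟨norm_pos_iff.mp h₀, (abs_log_le_iff_mem_Icc h₀).mpr hIcc⟩

theorem norm_laurentCoeff_one_le {f : ℂ → ℂ} {R C : ℝ} (hR : 0 < R)
    (hf : DifferentiableOn ℂ f (ann R)) (hC : ∀ z ∈ ann R, ‖f z‖ ≤ C) (m : ℤ) :
    ‖laurentCoeff f 1 m‖ ≤ C * exp (-(|(m : ℝ)| * (2 * π * R))) := by
  -- the radius in `[e^{-2πR}, e^{2πR}]` with `s ^ (-m) = e^{-2π|m|R}`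
  set s := exp (m.sign * (2 * π * R))
  have hs : s ∈ Icc (exp (-(2 * π * R))) (exp (2 * π * R)) := by
    refine (abs_log_le_iff_mem_Icc (exp_pos _)).mp ?_
    rw [log_exp, abs_mul, abs_of_pos (by positivity : 0 < 2 * π * R)]
    refine mul_le_of_le_one_left (by positivity) ?_
    rcases m.sign_trichotomy with h | h | h <;> simp [h]
  calc ‖laurentCoeff f 1 m‖ ≤ C * s ^ (-m) :=
        norm_laurentCoeff_le_of_mem_Icc (exp_pos _).le hf hC (one_mem_Ioo_exp (by positivity)) m hs
          (exp_pos _)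
    _ = C * exp (-(|(m : ℝ)| * (2 * π * R))) := by
        rw [← rpow_intCast, ← exp_mul, ← Int.cast_abs, ← Int.sign_mul_self_eq_abs]
        push_cast
        ring_nf

theorem stmt_5_general (R R'' : ℝ) (hR'' : 0 < R'') (hRlt : R'' < R)
    (f : ℂ → ℂ)
    (hf_holo : DifferentiableOn ℂ f (ann R))
    (a : ℤ → ℂ)
    (ha : ∀ m : ℤ, a m = (2 * Real.pi * Complex.I)⁻¹ •
      (∮ z in C(0, 1), f z * z ^ (-m - 1 : ℤ)))
    (Cf : ℝ)
    (hCf : IsLUB {y : ℝ | ∃ z ∈ closure (ann R), y = ‖f z‖} Cf) :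
    (∀ m : ℤ, ‖a m‖ ≤ Cf * Real.exp (-(2*Real.pi*(|m| : ℝ)*R))) ∧
    (∀ m : ℤ, ∀ z ∈ closure (ann R''),
      ‖a m * z ^ m‖ ≤ Cf * Real.exp (-(2*Real.pi*(|m| : ℝ)*(R - R'')))) ∧
    (∀ z ∈ ann R, Summable (fun m : ℤ => ‖a m * z ^ m‖) ∧
      HasSum (fun m : ℤ => a m * z ^ m) (f z)) := by
  have hR : 0 < R := hR''.trans hRlt
  have hC : ∀ z ∈ ann R, ‖f z‖ ≤ Cf := fun z hz => hCf.1 ⟨z, subset_closure hz, rfl⟩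
  have ha' : a = laurentCoeff f 1 := funext ha
  have hcoeff : ∀ m, ‖a m‖ ≤ Cf * exp (-(|(m : ℝ)| * (2 * π * R))) :=
    ha' ▸ norm_laurentCoeff_one_le hR hf_holo hC
  refine ⟨fun m => ?_, fun m z hz => ?_, fun z hz => ?_⟩
  · convert hcoeff m using 4; ring
  · obtain ⟨hz₀, hzR''⟩ := closure_ann_subset R'' hz
    convert norm_mul_zpow_le (hcoeff m) hz₀ hzR'' using 4; ring
  · obtain ⟨hz₀, hzR⟩ := mem_ann_iff.mp hz
    have hsum : Summable fun m => ‖a m * z ^ m‖ :=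
      ((summable_exp_neg_abs_mul (sub_pos.mpr hzR)).mul_left Cf).of_nonneg_of_le
        (fun _ => norm_nonneg _) fun m => norm_mul_zpow_le (hcoeff m) hz₀ le_rfl
    have hradius : laurentCoeff f ‖z‖ = a := funext fun m => by
      rw [ha', laurentCoeff_eq_of_differentiableOn (exp_pos _).le hf_holo hz
        (one_mem_Ioo_exp (by positivity)) m]
    have hsphere : sphere (0 : ℂ) ‖z‖ ⊆ ann R := fun w hw =>
      show ‖w‖ ∈ Ioo _ _ from (mem_sphere_zero_iff_norm.mp hw).symm ▸ hz
    rw [← hradius] at hsum ⊢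
    exact ⟨hsum, hasSum_laurentCoeff_mul_zpow hz₀ (hf_holo.continuousOn.mono hsphere) hsum⟩

/-- Laurent expansion with geometric bounds. For `0 < R'' < R` and `f`
continuous on the closed annulus `closure 𝔸_R`, holomorphic on `𝔸_R`, with Laurent
coefficients `a_m = (1/2πi)∮_{|z|=1} f(z) z^{−m−1} dz` and `Cf = sup |f|`:
(i) `|a_m| ≤ Cf e^{−2π|m|R}`; (ii) `|a_m z^m| ≤ Cf e^{−2π|m|(R−R'')}` on
`closure 𝔸_{R''}`; (iii) `f(z) = Σ_{m∈ℤ} a_m z^m` absolutely on `𝔸_R`. -/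
theorem stmt_5 (R R'' : ℝ) (hR'' : 0 < R'') (hRlt : R'' < R)
    (f : ℂ → ℂ)
    (hf_cont : ContinuousOn f (closure (ann R)))
    (hf_holo : DifferentiableOn ℂ f (ann R))
    (a : ℤ → ℂ)
    (ha : ∀ m : ℤ, a m = (2 * Real.pi * Complex.I)⁻¹ •
      (∮ z in C(0, 1), f z * z ^ (-m - 1 : ℤ)))
    (Cf : ℝ)
    (hCf : IsLUB {y : ℝ | ∃ z ∈ closure (ann R), y = ‖f z‖} Cf) :
    (∀ m : ℤ, ‖a m‖ ≤ Cf * Real.exp (-(2*Real.pi*(|m| : ℝ)*R))) ∧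
    (∀ m : ℤ, ∀ z ∈ closure (ann R''),
      ‖a m * z ^ m‖ ≤ Cf * Real.exp (-(2*Real.pi*(|m| : ℝ)*(R - R'')))) ∧
    (∀ z ∈ ann R, Summable (fun m : ℤ => ‖a m * z ^ m‖) ∧
      HasSum (fun m : ℤ => a m * z ^ m) (f z)) :=
  stmt_5_general R R'' hR'' hRlt f hf_holo a ha Cf hCf
end

section
/- For every real η with 0 < η < 1 and every integer n ≥ 1, the family (η^{i₁+⋯+i_n}) indexed by strictly increasing tuples 0 ≤ i₁ < i₂ < ⋯ < i_n of natural numbers is summable, and Σ_{0 ≤ i₁ < ⋯ < i_n} η^{i₁+⋯+i_n} = η^{n(n−1)/2} / ∏_{k=1}^n (1−η^k). -/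
/-!
Splitting off the smallest entry, a strictly increasing tuple `i₀ < i₁ < ⋯ < i_n` is `i₀ = a`
followed by `a + 1 + i'` with `i'` an arbitrary strictly increasing `n`-tuple, and then
`∑ i = (n + 1) a + n + ∑ i'`. So the sum `S (n + 1)` factors as
`η ^ n * S n * ∑ₐ (η ^ (n + 1)) ^ a = η ^ n * S n / (1 - η ^ (n + 1))`,
and the formula follows by induction from `S 0 = 1`.
-/

open Finset

def strictMonoConsEquiv (n : ℕ) :
    ℕ × {i : Fin n → ℕ // StrictMono i} ≃ {i : Fin (n + 1) → ℕ // StrictMono i} where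
  toFun x := ⟨Fin.cons x.1 fun p => x.1 + 1 + x.2.1 p,
    Fin.strictMono_cons.2 ⟨fun _ => by omega, fun _ _ h => by simpa using x.2.2 h⟩⟩
  invFun i := (i.1 0, ⟨fun p => i.1 p.succ - (i.1 0 + 1), fun p q h => by
    have := i.2 (Fin.succ_pos p)
    have := i.2 (Fin.succ_lt_succ_iff.2 h)
    show i.1 p.succ - _ < i.1 q.succ - _
    omega⟩)
  left_inv x := by ext <;> simp
  right_inv i := by
    ext p
    refine Fin.cases (by simp) (fun p => ?_) p
    have := i.2 (Fin.succ_pos p)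
    simp only [Fin.cons_succ]
    omega

lemma sum_strictMonoConsEquiv {n : ℕ} (x : ℕ × {i : Fin n → ℕ // StrictMono i}) :
    ∑ p, (strictMonoConsEquiv n x).1 p = (n + 1) * x.1 + n + ∑ p, x.2.1 p := by
  simp only [strictMonoConsEquiv, Equiv.coe_fn_mk, Fin.sum_cons, sum_add_distrib, sum_const,
    card_univ, Fintype.card_fin, smul_eq_mul]
  ring

theorem hasSum_pow_sum_strictMono {η : ℝ} (hη0 : 0 ≤ η) (hη1 : η < 1) (n : ℕ) :
    HasSum (fun i : {i : Fin n → ℕ // StrictMono i} => η ^ (∑ p, i.1 p))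
      (η ^ (n * (n - 1) / 2) / ∏ k ∈ Icc 1 n, (1 - η ^ k)) := by
  induction n with
  | zero =>
    simpa using hasSum_single (f := fun i : {i : Fin 0 → ℕ // StrictMono i} => η ^ (∑ p, i.1 p))
      ⟨Fin.elim0, fun a => a.elim0⟩ fun i hi => (hi (Subtype.ext (funext fun a => a.elim0))).elim
  | succ n ih =>
    have hgeom : HasSum (fun a : ℕ => (η ^ (n + 1)) ^ a) (1 - η ^ (n + 1))⁻¹ :=
      hasSum_geometric_of_lt_one (pow_nonneg hη0 _) (pow_lt_one₀ hη0 hη1 n.succ_ne_zero)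
    have hsummable := hgeom.summable.mul_of_nonneg ih.summable
      (fun _ => pow_nonneg (pow_nonneg hη0 _) _) (fun _ => pow_nonneg hη0 _)
    have hprod := hgeom.mul ih hsummable
    have hterm : (fun i : {i : Fin (n + 1) → ℕ // StrictMono i} => η ^ (∑ p, i.1 p)) ∘
        strictMonoConsEquiv n = fun x => η ^ n * ((η ^ (n + 1)) ^ x.1 * η ^ (∑ p, x.2.1 p)) := by
      funext x
      rw [Function.comp_apply, sum_strictMonoConsEquiv, pow_add, pow_add, pow_mul]
      ring
    have hsum : η ^ ((n + 1) * (n + 1 - 1) / 2) / ∏ k ∈ Icc 1 (n + 1), (1 - η ^ k) =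
        η ^ n * ((1 - η ^ (n + 1))⁻¹ * (η ^ (n * (n - 1) / 2) / ∏ k ∈ Icc 1 n, (1 - η ^ k))) := by
      rw [Nat.triangle_succ, prod_Icc_succ_top (by omega), div_eq_mul_inv, mul_inv]
      ring
    rw [← (strictMonoConsEquiv n).hasSum_iff, hterm, hsum]
    exact hprod.mul_left _

theorem stmt_7_general (η : ℝ) (hη0 : 0 < η) (hη1 : η < 1) (n : ℕ) :
    Summable (fun i : {i : Fin n → ℕ // StrictMono i} => η ^ (∑ p, i.1 p)) ∧
    ∑' i : {i : Fin n → ℕ // StrictMono i}, η ^ (∑ p, i.1 p)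
      = η ^ (n * (n - 1) / 2) / ∏ k ∈ Finset.Icc 1 n, (1 - η ^ k) :=
  have h := hasSum_pow_sum_strictMono hη0.le hη1 n
  ⟨h.summable, h.tsum_eq⟩

/-- For `0 < η < 1` and `n ≥ 1`, the family `η^{i₁+⋯+i_n}` indexed by
strictly increasing tuples `0 ≤ i₁ < ⋯ < i_n` of naturals is summable, with
`Σ η^{i₁+⋯+i_n} = η^{n(n−1)/2} / ∏_{k=1}^n (1−η^k)`. -/
theorem stmt_7 (η : ℝ) (hη0 : 0 < η) (hη1 : η < 1) (n : ℕ) (hn : 1 ≤ n) :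
    Summable (fun i : {i : Fin n → ℕ // StrictMono i} => η ^ (∑ p, i.1 p)) ∧
    ∑' i : {i : Fin n → ℕ // StrictMono i}, η ^ (∑ p, i.1 p)
      = η ^ (n * (n - 1) / 2) / ∏ k ∈ Finset.Icc 1 n, (1 - η ^ k) :=
  stmt_7_general η hη0 hη1 n
end

section
/- Let m ≥ 1 and N ≥ 1 be integers, let D and U be open subsets of ℂ^m with U connected and bounded, let K ⊆ ℂ^m be compact with K ⊆ U and closure(U) ⊆ D, and let V ⊆ ℂᴺ be open. Let Ψ : V × D → ℂ^m be holomorphic, and suppose that for every x ∈ V the map Ψ(x,·) maps U into K. Then for every x ∈ V the map Ψ(x,·) has a unique fixed point ζ(x) in closure(U); moreover ζ(x) lies in U, the map x ↦ ζ(x) is holomorphic on V, and every eigenvalue of the derivative of Ψ(x,·) at ζ(x) (a ℂ-linear endomorphism of ℂ^m) has modulus strictly less than 1. -/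
/-!
Earle–Hamilton argument. Fix `f = Ψ x`, which maps `U` into the compact set `K ⊆ U`. For a
small `ε > 0` depending only on `K` and `U`, the perturbation `g = f + ε (f - f p)` still maps
`U` into `U` and has derivative `(1 + ε) f'(p)` at `p`; feeding `g` back into the Cauchy
estimate along an orbit shows that the derivatives of the iterates `f^[n]` decay like
`(1 + ε)⁻ⁿ` at points of fixed depth in `U`. As `U` is connected, points of `K` are joined by
chains of short segments deep inside `U`, so `dist (f^[n] a) (f^[n] b) ≤ C θⁿ` on `K`, with
`C` and `θ < 1` independent of `x`. Hence the iterates converge, uniformly in `x`, to a fixed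
point `ζ x`, which is unique in `closure U` because every fixed point there lies in `K`; `ζ` is
holomorphic as a uniform limit of holomorphic maps, and `‖f'(ζ x) ^ n‖ ≤ C θⁿ` keeps all
eigenvalues in the unit disc.
-/

open Set Metric Filter Function Topology

section

variable {𝕜 : Type*} [RCLike 𝕜] {E F : Type*} [NormedAddCommGroup E] [NormedSpace 𝕜 E]
  [NormedAddCommGroup F] [NormedSpace 𝕜 F] {U : Set E} {δ δ' L L' : ℝ} {a b c : E}

variable (𝕜 F) in
def IncrementBound (U : Set E) (δ L : ℝ) (a b : E) : Prop :=
  ∀ (G : E → F) (M : ℝ), 0 ≤ M → DifferentiableOn 𝕜 G U →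
    (∀ z, ball z δ ⊆ U → ‖fderiv 𝕜 G z‖ ≤ M) → dist (G a) (G b) ≤ M * L

namespace IncrementBound

theorem mono (h : IncrementBound 𝕜 F U δ L a b) (hδ : δ' ≤ δ) (hL : L ≤ L') :
    IncrementBound 𝕜 F U δ' L' a b := fun G M hM hG hbound =>
  (h G M hM hG fun z hz => hbound z ((ball_subset_ball hδ).trans hz)).trans
    (mul_le_mul_of_nonneg_left hL hM)

theorem symm (h : IncrementBound 𝕜 F U δ L a b) : IncrementBound 𝕜 F U δ L b a :=
  fun G M hM hG hbound => dist_comm (G a) (G b) ▸ h G M hM hG hbound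

theorem trans (hab : IncrementBound 𝕜 F U δ L a b) (hbc : IncrementBound 𝕜 F U δ' L' b c) :
    IncrementBound 𝕜 F U (min δ δ') (L + L') a c := fun G M hM hG hbound =>
  calc dist (G a) (G c) ≤ dist (G a) (G b) + dist (G b) (G c) := dist_triangle _ _ _
    _ ≤ M * L + M * L' := add_le_add
        (hab.mono (min_le_left δ δ') le_rfl G M hM hG hbound)
        (hbc.mono (min_le_right δ δ') le_rfl G M hM hG hbound)
    _ = M * (L + L') := by ring

end IncrementBound

theorem incrementBound_of_mem_ball {x : E} {r : ℝ} (hx : ball x r ⊆ U)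
    (ha : a ∈ ball x (r / 2)) (hb : b ∈ ball x (r / 2)) :
    IncrementBound 𝕜 F U (r / 2) r a b := by
  let : NormedSpace ℝ E := NormedSpace.restrictScalars ℝ 𝕜 E
  intro G M hM hG hbound
  have hr : 0 < r / 2 := pos_of_mem_ball ha
  have hdeep : ∀ z ∈ ball x (r / 2), ball z (r / 2) ⊆ U := fun z hz =>
    (ball_subset_ball' (by linarith [mem_ball.1 hz])).trans hx
  have hmvt := (convex_ball x (r / 2)).norm_image_sub_le_of_norm_fderiv_le (𝕜 := 𝕜)
    (fun z hz => (hG z (hdeep z hz (mem_ball_self hr))).differentiableAt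
      (mem_of_superset (ball_mem_nhds z hr) (hdeep z hz)))
    (fun z hz => hbound z (hdeep z hz)) hb ha
  rw [← dist_eq_norm, ← dist_eq_norm] at hmvt
  calc dist (G a) (G b) ≤ M * dist a b := hmvt
    _ ≤ M * r := by
      gcongr
      linarith [dist_triangle_right a b x, mem_ball.1 ha, mem_ball.1 hb]

theorem IsPreconnected.exists_incrementBound (hU : IsOpen U) (hUc : IsPreconnected U)
    (ha : a ∈ U) (hb : b ∈ U) : ∃ δ > 0, ∃ L, IncrementBound 𝕜 F U δ L a b := by
  refine hUc.induction₂' (fun a b => ∃ δ > 0, ∃ L, IncrementBound 𝕜 F U δ L a b)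
    (fun x hx => ?_) (fun _ _ _ _ _ _ ⟨δ, hδ, L, hab⟩ ⟨δ', hδ', L', hbc⟩ =>
      ⟨min δ δ', lt_min hδ hδ', L + L', hab.trans hbc⟩) ha hb
  obtain ⟨r, hr, hxr⟩ := Metric.isOpen_iff.1 hU x hx
  have hx' : x ∈ ball x (r / 2) := mem_ball_self (half_pos hr)
  filter_upwards [nhdsWithin_le_nhds (ball_mem_nhds x (half_pos hr))] with y hy
  exact ⟨⟨r / 2, half_pos hr, r, incrementBound_of_mem_ball hxr hx' hy⟩,
    ⟨r / 2, half_pos hr, r, incrementBound_of_mem_ball hxr hy hx'⟩⟩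

theorem IsCompact.exists_incrementBound {K : Set E} (hK : IsCompact K) (hU : IsOpen U)
    (hUc : IsPreconnected U) (hKU : K ⊆ U) :
    ∃ δ > 0, ∃ L, ∀ a ∈ K, ∀ b ∈ K, IncrementBound 𝕜 F U δ L a b := by
  rcases K.eq_empty_or_nonempty with rfl | ⟨c, hc⟩
  · exact ⟨1, one_pos, 0, by simp⟩
  suffices ∃ δ > 0, ∃ L, ∀ b ∈ K, IncrementBound 𝕜 F U δ L c b by
    obtain ⟨δ, hδ, L, h⟩ := this
    exact ⟨min δ δ, lt_min hδ hδ, L + L, fun a ha b hb => (h a ha).symm.trans (h b hb)⟩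
  refine hK.induction_on ⟨1, one_pos, 0, by simp⟩
    (fun s t hst ⟨δ, hδ, L, h⟩ => ⟨δ, hδ, L, fun b hb => h b (hst hb)⟩)
    (fun s t ⟨δ, hδ, L, hs⟩ ⟨δ', hδ', L', ht⟩ => ⟨min δ δ', lt_min hδ hδ', max L L',
      fun b hb => hb.elim (fun hb => (hs b hb).mono (min_le_left _ _) (le_max_left _ _))
        fun hb => (ht b hb).mono (min_le_right _ _) (le_max_right _ _)⟩)
    fun x hx => ?_
  obtain ⟨r, hr, hxr⟩ := Metric.isOpen_iff.1 hU x (hKU hx)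
  obtain ⟨δ, hδ, L, hcx⟩ := hUc.exists_incrementBound (𝕜 := 𝕜) (F := F) hU (hKU hc) (hKU hx)
  exact ⟨ball x (r / 2), mem_nhdsWithin_of_mem_nhds (ball_mem_nhds x (half_pos hr)),
    min δ (r / 2), lt_min hδ (half_pos hr), L + r, fun b hb =>
      hcx.trans (incrementBound_of_mem_ball hxr (mem_ball_self (half_pos hr)) hb)⟩

theorem IsCompact.exists_pos_add_smul_sub_mem {K : Set E} (hK : IsCompact K) (hU : IsOpen U)
    (hKU : K ⊆ U) : ∃ ε > (0 : ℝ), ∀ p ∈ K, ∀ q ∈ K, p + (ε : 𝕜) • (p - q) ∈ U := by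
  obtain ⟨δ, hδ, hδU⟩ := hK.exists_thickening_subset_open hU hKU
  have hd : 0 ≤ diam K := diam_nonneg
  refine ⟨δ / (diam K + 1), by positivity, fun p hp q hq =>
    hδU (ball_subset_thickening hp δ ?_)⟩
  rw [mem_ball, dist_self_add_left, norm_smul, RCLike.norm_ofReal,
    abs_of_pos (by positivity), ← dist_eq_norm]
  calc δ / (diam K + 1) * dist p q ≤ δ / (diam K + 1) * diam K := by
        gcongr
        exact dist_le_diam_of_mem hK.isBounded hp hq
    _ < δ := by
        rw [div_mul_eq_mul_div, div_lt_iff₀ (by positivity)]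
        nlinarith

end

section

variable {E F : Type*} [NormedAddCommGroup E] [NormedSpace ℂ E] [NormedAddCommGroup F]
  [NormedSpace ℂ F]

theorem norm_fderiv_le_of_forall_mem_ball_norm_le {G : E → F} {z : E} {r C : ℝ} (hr : 0 < r)
    (hG : DifferentiableOn ℂ G (ball z r)) (hC : ∀ u ∈ ball z r, ‖G u‖ ≤ C) :
    ‖fderiv ℂ G z‖ ≤ 2 * C / r := by
  refine Complex.norm_fderiv_le_div_of_mapsTo_ball hG (fun u hu => ?_) hr
  rw [mem_closedBall, dist_eq_norm]
  linarith [norm_sub_le (G u) (G z), hC u hu, hC z (mem_ball_self hr)]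

theorem fderiv_iterate_succ {U : Set E} (hU : IsOpen U) {f : E → E}
    (hf : DifferentiableOn ℂ f U) (hfU : MapsTo f U U) {z : E} (hz : z ∈ U) (n : ℕ) :
    fderiv ℂ (f^[n + 1]) z = (fderiv ℂ f (f^[n] z)).comp (fderiv ℂ (f^[n]) z) := by
  have hfn := ((hf.iterate hfU n).differentiableAt (hU.mem_nhds hz)).hasFDerivAt
  have hf' := (hf.differentiableAt (hU.mem_nhds (hfU.iterate n hz))).hasFDerivAt
  rw [iterate_succ']
  exact (hf'.comp z hfn).fderiv

theorem norm_fderiv_comp_fderiv_iterate_le {U K : Set E} (hU : IsOpen U) {f : E → E}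
    (hf : DifferentiableOn ℂ f U) (hfK : MapsTo f U K) {ε : ℝ} (hε : 0 < ε)
    (hεK : ∀ p ∈ K, ∀ q ∈ K, p + (ε : ℂ) • (p - q) ∈ U) {z : E} {r : ℝ} (hr : 0 < r)
    (hz : ball z r ⊆ U) {C : ℝ} (n : ℕ) {h : E → F} (hh : DifferentiableOn ℂ h U)
    (hC : ∀ u ∈ U, ‖h u‖ ≤ C) :
    ‖(fderiv ℂ h (f^[n] z)).comp (fderiv ℂ (f^[n]) z)‖ ≤ 2 * C / r * (1 + ε)⁻¹ ^ n := by
  -- `hεK` with `p = q` says `K ⊆ U`.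
  have hfU : MapsTo f U U := fun u hu => by simpa using hεK _ (hfK hu) _ (hfK hu)
  have hzU : z ∈ U := hz (mem_ball_self hr)
  induction n generalizing h with
  | zero =>
    simpa using
      norm_fderiv_le_of_forall_mem_ball_norm_le hr (hh.mono hz) fun u hu => hC u (hz hu)
  | succ n ih =>
    set p := f^[n] z
    have hp : p ∈ U := hfU.iterate n hzU
    set c := f p
    -- `h ∘ g` is again admissible, and `g` has derivative `(1 + ε) f'(p)` at `p`.
    set g : E → E := fun u => f u + (ε : ℂ) • (f u - c)
    have hgU : MapsTo g U U := fun u hu => hεK _ (hfK hu) _ (hfK hp)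
    have hDf := (hf.differentiableAt (hU.mem_nhds hp)).hasFDerivAt
    have hgp : g p = c := by simp [g, c]
    have hDg : HasFDerivAt g ((1 + ε : ℂ) • fderiv ℂ f p) p :=
      (hDf.add ((hDf.sub_const c).const_smul (ε : ℂ))).congr_fderiv
        (by rw [add_smul, one_smul])
    have hDh : HasFDerivAt h (fderiv ℂ h c) (g p) := by
      rw [hgp]
      exact (hh.differentiableAt (hU.mem_nhds (hfU hp))).hasFDerivAt
    have hcomp : (fderiv ℂ (h ∘ g) p).comp (fderiv ℂ (f^[n]) z) =
        (1 + ε : ℂ) • (fderiv ℂ h c).comp (fderiv ℂ (f^[n + 1]) z) := by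
      rw [(hDh.comp p hDg).fderiv, fderiv_iterate_succ hU hf hfU hzU]
      ext v
      simp [p]
    have hg : DifferentiableOn ℂ g U := hf.add ((hf.sub_const c).const_smul (ε : ℂ))
    have hnorm : ‖(1 + ε : ℂ)‖ = 1 + ε := by norm_cast; exact abs_of_pos (by linarith)
    have := ih (hh.comp hg hgU) fun u hu => hC _ (hgU hu)
    rw [hcomp, norm_smul, hnorm] at this
    rw [iterate_succ_apply', pow_succ, ← mul_assoc, le_mul_inv_iff₀ (by linarith)]
    linarith

theorem exists_iterate_contraction {U K : Set E} (hU : IsOpen U) (hUc : IsPreconnected U)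
    (hUb : Bornology.IsBounded U) (hK : IsCompact K) (hKU : K ⊆ U) :
    ∃ C θ : ℝ, 0 ≤ θ ∧ θ < 1 ∧
      ∀ f : E → E, DifferentiableOn ℂ f U → MapsTo f U K → ∀ n,
      (∀ z ∈ K, ‖fderiv ℂ (f^[n]) z‖ ≤ C * θ ^ n) ∧
      ∀ a ∈ K, ∀ b ∈ K, dist (f^[n] a) (f^[n] b) ≤ C * θ ^ n := by
  obtain ⟨ε, hε, hεK⟩ := hK.exists_pos_add_smul_sub_mem (𝕜 := ℂ) hU hKU
  obtain ⟨R, hR, hUR⟩ := hUb.exists_pos_norm_le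
  obtain ⟨δ₀, hδ₀, hδ₀U⟩ := hK.exists_thickening_subset_open hU hKU
  obtain ⟨δ₁, hδ₁, L, hL⟩ := hK.exists_incrementBound (𝕜 := ℂ) (F := E) hU hUc hKU
  set r := min δ₀ δ₁
  have hr : 0 < r := lt_min hδ₀ hδ₁
  refine ⟨2 * R / r * max 1 L, (1 + ε)⁻¹, by positivity, inv_lt_one_of_one_lt₀ (by linarith),
    fun f hf hfK n => ?_⟩
  set M := 2 * R / r * (1 + ε)⁻¹ ^ n
  have hM : 0 ≤ M := by positivity
  have hCM : 2 * R / r * max 1 L * (1 + ε)⁻¹ ^ n = M * max 1 L := by ring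
  have hderiv : ∀ z, ball z r ⊆ U → ‖fderiv ℂ (f^[n]) z‖ ≤ M := fun z hz => by
    simpa only [fderiv_id, ContinuousLinearMap.id_comp] using
      norm_fderiv_comp_fderiv_iterate_le hU hf hfK hε hεK hr hz n differentiableOn_id hUR
  refine ⟨fun z hz => ?_, fun a ha b hb => ?_⟩
  · have hzU : ball z r ⊆ U :=
      (ball_subset_ball (min_le_left _ _)).trans ((ball_subset_thickening hz _).trans hδ₀U)
    rw [hCM]
    exact (hderiv z hzU).trans (le_mul_of_one_le_right hM (le_max_left _ _))
  · have hfn : DifferentiableOn ℂ (f^[n]) U := hf.iterate (hfK.mono_right hKU) n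
    rw [hCM]
    exact (hL a ha b hb (f^[n]) M hM hfn fun z hz =>
      hderiv z ((ball_subset_ball (min_le_right _ _)).trans hz)).trans
      (mul_le_mul_of_nonneg_left (le_max_right _ _) hM)

end

theorem nonpos_of_forall_le_mul_pow {x C θ : ℝ} (hθ0 : 0 ≤ θ) (hθ : θ < 1)
    (h : ∀ n : ℕ, x ≤ C * θ ^ n) : x ≤ 0 :=
  ge_of_tendsto' (by simpa using (tendsto_pow_atTop_nhds_zero_of_lt_one hθ0 hθ).const_mul C) h

section

variable {X : Type*} [MetricSpace X] {f : X → X} {K : Set X} {C θ : ℝ}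

theorem exists_isFixedPt_of_dist_iterate_le (hK : IsComplete K) {a : X} (ha : a ∈ K)
    (hfK : MapsTo f K K) (hf : ContinuousOn f K) (hθ : θ < 1)
    (h : ∀ n, ∀ a ∈ K, ∀ b ∈ K, dist (f^[n] a) (f^[n] b) ≤ C * θ ^ n) :
    ∃ ζ ∈ K, IsFixedPt f ζ := by
  have hmem : ∀ n, f^[n] a ∈ K := fun n => hfK.iterate n ha
  have hcauchy : CauchySeq fun n => f^[n] a := cauchySeq_of_le_geometric θ C hθ fun n => by
    simpa only [iterate_succ_apply] using h n a ha (f a) (hfK ha)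
  obtain ⟨ζ, hζ, hlim⟩ := cauchySeq_tendsto_of_isComplete hK hmem hcauchy
  have hflim : Tendsto (fun n => f (f^[n] a)) atTop (𝓝 (f ζ)) :=
    (hf ζ hζ).tendsto.comp (tendsto_nhdsWithin_iff.2 ⟨hlim, Eventually.of_forall hmem⟩)
  refine ⟨ζ, hζ, tendsto_nhds_unique (f := fun n => f^[n + 1] a) ?_
    (hlim.comp (tendsto_add_atTop_nat 1))⟩
  simpa only [iterate_succ_apply'] using hflim

theorem Function.IsFixedPt.eq_of_dist_iterate_le {a b : X} (ha : IsFixedPt f a)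
    (hb : IsFixedPt f b) (hθ0 : 0 ≤ θ) (hθ : θ < 1)
    (h : ∀ n, dist (f^[n] a) (f^[n] b) ≤ C * θ ^ n) : a = b :=
  dist_le_zero.1 <| nonpos_of_forall_le_mul_pow hθ0 hθ fun n => by
    simpa only [(ha.iterate n).eq, (hb.iterate n).eq] using h n

end

theorem Function.IsFixedPt.mem_of_mem_closure {X : Type*} [TopologicalSpace X] {f : X → X}
    {s t : Set X} {y : X} (hy : IsFixedPt f y) (hys : y ∈ closure s)
    (hf : ContinuousOn f (closure s)) (hst : MapsTo f s t) (ht : IsClosed t) : y ∈ t :=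
  hy ▸ ht.closure_subset (hst.closure_of_continuousOn hf hys)

theorem norm_lt_one_of_hasEigenvalue_of_norm_pow_le {𝕜 E : Type*} [NontriviallyNormedField 𝕜]
    [NormedAddCommGroup E] [NormedSpace 𝕜 E] {A : E →L[𝕜] E} {C θ : ℝ} (hθ0 : 0 ≤ θ)
    (hθ : θ < 1) (hA : ∀ n, ‖A ^ n‖ ≤ C * θ ^ n) {μ : 𝕜}
    (hμ : Module.End.HasEigenvalue (A : E →ₗ[𝕜] E) μ) : ‖μ‖ < 1 := by
  obtain ⟨v, hv⟩ := hμ.exists_hasEigenvector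
  have hv0 : 0 < ‖v‖ := norm_pos_iff.2 hv.2
  by_contra! hμ1
  have : ‖v‖ ≤ 0 := nonpos_of_forall_le_mul_pow (C := C * ‖v‖) hθ0 hθ fun n => calc
    ‖v‖ ≤ ‖μ ^ n • v‖ := by
        rw [norm_smul, norm_pow]
        exact le_mul_of_one_le_left (norm_nonneg _) (one_le_pow₀ hμ1)
    _ = ‖(A ^ n) v‖ := by rw [← hv.pow_apply n, ← ContinuousLinearMap.toLinearMap_pow]; rfl
    _ ≤ ‖A ^ n‖ * ‖v‖ := (A ^ n).le_opNorm v
    _ ≤ C * θ ^ n * ‖v‖ := by gcongr; exact hA n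
    _ = C * ‖v‖ * θ ^ n := by ring
  linarith

theorem tendstoUniformlyOn_of_dist_le_mul_pow {X Y : Type*} [PseudoMetricSpace Y]
    {F : ℕ → X → Y} {g : X → Y} {s : Set X} {C θ : ℝ} (hθ0 : 0 ≤ θ) (hθ : θ < 1)
    (h : ∀ n, ∀ x ∈ s, dist (g x) (F n x) ≤ C * θ ^ n) : TendstoUniformlyOn F g atTop s := by
  rw [Metric.tendstoUniformlyOn_iff]
  intro ε hε
  filter_upwards [((tendsto_pow_atTop_nhds_zero_of_lt_one hθ0 hθ).const_mul C).eventually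
    (gt_mem_nhds (by simpa using hε))] with n hn x hx
  exact (h n x hx).trans_lt hn

section

variable {P G : Type*} [NormedAddCommGroup P] [NormedSpace ℂ P] [NormedAddCommGroup G]
  [NormedSpace ℂ G] [CompleteSpace G] {V : Set P}

theorem TendstoUniformlyOn.differentiableOn_of_isOpen {F : ℕ → P → G} {g : P → G}
    (hFg : TendstoUniformlyOn F g atTop V) (hV : IsOpen V)
    (hF : ∀ n, DifferentiableOn ℂ (F n) V) :
    DifferentiableOn ℂ g V := by
  intro x hx
  obtain ⟨ρ, hρ, hxρ⟩ := Metric.isOpen_iff.1 hV x hx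
  have hsV : ∀ y ∈ ball x (ρ / 2), ball y (ρ / 2) ⊆ V := fun y hy =>
    (ball_subset_ball' (by linarith [mem_ball.1 hy])).trans hxρ
  have hderiv : ∀ n, ∀ y ∈ ball x (ρ / 2), HasFDerivAt (F n) (fderiv ℂ (F n) y) y :=
    fun n y hy => ((hF n).differentiableAt
      (mem_of_superset (ball_mem_nhds y (half_pos hρ)) (hsV y hy))).hasFDerivAt
  have hcauchy : UniformCauchySeqOn (fun n => fderiv ℂ (F n)) atTop (ball x (ρ / 2)) := by
    rw [Metric.uniformCauchySeqOn_iff]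
    intro ε hε
    obtain ⟨N, hN⟩ := Metric.uniformCauchySeqOn_iff.1 hFg.uniformCauchySeqOn (ε * ρ / 8)
      (by positivity)
    refine ⟨N, fun p hp q hq y hy => ?_⟩
    rw [dist_eq_norm, ← ((hderiv p y hy).sub (hderiv q y hy)).fderiv]
    calc ‖fderiv ℂ (fun u => F p u - F q u) y‖ ≤ 2 * (ε * ρ / 8) / (ρ / 2) :=
          norm_fderiv_le_of_forall_mem_ball_norm_le (half_pos hρ)
            (((hF p).sub (hF q)).mono (hsV y hy)) fun u hu => by
              rw [← dist_eq_norm]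
              exact (hN p hp q hq u (hsV y hy hu)).le
      _ < ε := by field_simp; linarith
  choose! g' hg' using fun y (hy : y ∈ ball x (ρ / 2)) =>
    cauchySeq_tendsto_of_complete (hcauchy.cauchySeq hy)
  have hx' : x ∈ ball x (ρ / 2) := mem_ball_self (half_pos hρ)
  exact (hasFDerivAt_of_tendstoUniformlyOn isOpen_ball
    (hcauchy.tendstoUniformlyOn_of_tendsto hg') hderiv
    (fun y hy => hFg.tendsto_at (hsV y hy (mem_ball_self (half_pos hρ)))) hx')
    |>.differentiableAt.differentiableWithinAt

end

theorem DifferentiableOn.iterate_apply {𝕜 P E : Type*} [NontriviallyNormedField 𝕜]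
    [NormedAddCommGroup P] [NormedSpace 𝕜 P] [NormedAddCommGroup E] [NormedSpace 𝕜 E]
    {Ψ : P → E → E} {V : Set P} {S : Set E}
    (hΨ : DifferentiableOn 𝕜 (fun p : P × E => Ψ p.1 p.2) (V ×ˢ S))
    (hS : ∀ x ∈ V, MapsTo (Ψ x) S S) {g : P → E} (hg : DifferentiableOn 𝕜 g V)
    (hgS : ∀ x ∈ V, g x ∈ S) (n : ℕ) : DifferentiableOn 𝕜 (fun x => (Ψ x)^[n] (g x)) V := by
  induction n with
  | zero => exact hg
  | succ n ih =>
    simp only [iterate_succ_apply']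
    exact hΨ.comp (differentiableOn_id.prodMk ih) fun x hx =>
      ⟨hx, (hS x hx).iterate n (hgS x hx)⟩

theorem stmt_10_general (m N : ℕ)
    (D U K : Set (Fin m → ℂ)) (V : Set (Fin N → ℂ))
    (hU : IsOpen U) (hUconn : IsConnected U)
    (hUbdd : Bornology.IsBounded U) (hK : IsCompact K)
    (hKU : K ⊆ U) (hUD : closure U ⊆ D) (hV : IsOpen V)
    (Ψ : (Fin N → ℂ) → (Fin m → ℂ) → (Fin m → ℂ))
    (hΨ : DifferentiableOn ℂ (fun p : (Fin N → ℂ) × (Fin m → ℂ) => Ψ p.1 p.2)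
      (V ×ˢ D))
    (hΨK : ∀ x ∈ V, ∀ z ∈ U, Ψ x z ∈ K) :
    ∃ ζ : (Fin N → ℂ) → (Fin m → ℂ),
      DifferentiableOn ℂ ζ V ∧
      ∀ x ∈ V, ζ x ∈ U ∧ Ψ x (ζ x) = ζ x ∧
        (∀ y ∈ closure U, Ψ x y = y → y = ζ x) ∧
        (∀ μ : ℂ, Module.End.HasEigenvalue
            ((fderiv ℂ (Ψ x) (ζ x)).toLinearMap) μ → ‖μ‖ < 1) := by
  obtain ⟨C, θ, hθ0, hθ1, hcontr⟩ :=
    exists_iterate_contraction hU hUconn.isPreconnected hUbdd hK hKU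
  obtain ⟨u₀, hu₀⟩ := hUconn.nonempty
  have hUD' : U ⊆ D := subset_closure.trans hUD
  have hΨD : ∀ x ∈ V, DifferentiableOn ℂ (Ψ x) D := fun x hx =>
    hΨ.comp ((differentiableOn_const x).prodMk differentiableOn_id) fun z hz => ⟨hx, hz⟩
  have hΨU : ∀ x ∈ V, DifferentiableOn ℂ (Ψ x) U := fun x hx => (hΨD x hx).mono hUD'
  have hdist : ∀ x ∈ V, ∀ n, ∀ a ∈ K, ∀ b ∈ K,
      dist ((Ψ x)^[n] a) ((Ψ x)^[n] b) ≤ C * θ ^ n := fun x hx n =>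
    (hcontr (Ψ x) (hΨU x hx) (hΨK x hx) n).2
  have hfix : ∀ x ∈ V, ∃ z ∈ K, IsFixedPt (Ψ x) z := fun x hx =>
    exists_isFixedPt_of_dist_iterate_le hK.isComplete (hΨK x hx u₀ hu₀)
      (fun z hz => hΨK x hx z (hKU hz)) ((hΨU x hx).continuousOn.mono hKU) hθ1 (hdist x hx)
  choose! ζ hζK hζfix using hfix
  refine ⟨ζ, ?_, fun x hx =>
    ⟨hKU (hζK x hx), hζfix x hx, fun y hy hyfix => ?_, fun μ hμ => ?_⟩⟩
  · refine (tendstoUniformlyOn_of_dist_le_mul_pow (F := fun n x => (Ψ x)^[n + 1] u₀) (C := C)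
      hθ0 hθ1 fun n x hx => ?_).differentiableOn_of_isOpen hV fun n => ?_
    · rw [← ((hζfix x hx).iterate n).eq, iterate_succ_apply]
      exact hdist x hx n _ (hζK x hx) _ (hΨK x hx u₀ hu₀)
    · exact (hΨ.mono (prod_mono subset_rfl hUD')).iterate_apply
        (fun x hx z hz => hKU (hΨK x hx z hz)) (differentiableOn_const u₀) (fun _ _ => hu₀) _
  · have hyK : y ∈ K := IsFixedPt.mem_of_mem_closure hyfix hy
      ((hΨD x hx).continuousOn.mono hUD) (hΨK x hx) hK.isClosed
    exact IsFixedPt.eq_of_dist_iterate_le hyfix (hζfix x hx) hθ0 hθ1 fun n =>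
      hdist x hx n y hyK _ (hζK x hx)
  · refine norm_lt_one_of_hasEigenvalue_of_norm_pow_le (C := C) hθ0 hθ1 (fun n => ?_) hμ
    rw [← (((hΨU x hx).differentiableAt (hU.mem_nhds (hKU (hζK x hx)))).hasFDerivAt.iterate
      (hζfix x hx) n).fderiv]
    exact (hcontr (Ψ x) (hΨU x hx) (hΨK x hx) n).1 _ (hζK x hx)

/-- Holomorphic fixed-point lemma (Lemma `pf` of the paper). Let
`U ⊆ ℂ^m` be open, connected, bounded, `K ⊆ U` compact, `closure U ⊆ D` with `D`
open, `V ⊆ ℂᴺ` open, and `Ψ : V × D → ℂ^m` holomorphic with `Ψ(x,·)(U) ⊆ K` for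
every `x ∈ V`. Then each `Ψ(x,·)` has a unique fixed point `ζ(x)` in `closure U`;
it lies in `U`, depends holomorphically on `x`, and all eigenvalues of the
derivative of `Ψ(x,·)` at `ζ(x)` have modulus `< 1`. -/
theorem stmt_10 (m N : ℕ) (hm : 1 ≤ m) (hN : 1 ≤ N)
    (D U K : Set (Fin m → ℂ)) (V : Set (Fin N → ℂ))
    (hD : IsOpen D) (hU : IsOpen U) (hUconn : IsConnected U)
    (hUbdd : Bornology.IsBounded U) (hK : IsCompact K)
    (hKU : K ⊆ U) (hUD : closure U ⊆ D) (hV : IsOpen V)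
    (Ψ : (Fin N → ℂ) → (Fin m → ℂ) → (Fin m → ℂ))
    (hΨ : DifferentiableOn ℂ (fun p : (Fin N → ℂ) × (Fin m → ℂ) => Ψ p.1 p.2)
      (V ×ˢ D))
    (hΨK : ∀ x ∈ V, ∀ z ∈ U, Ψ x z ∈ K) :
    ∃ ζ : (Fin N → ℂ) → (Fin m → ℂ),
      DifferentiableOn ℂ ζ V ∧
      ∀ x ∈ V, ζ x ∈ U ∧ Ψ x (ζ x) = ζ x ∧
        (∀ y ∈ closure U, Ψ x y = y → y = ζ x) ∧
        (∀ μ : ℂ, Module.End.HasEigenvalue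
            ((fderiv ℂ (Ψ x) (ζ x)).toLinearMap) μ → ‖μ‖ < 1) :=
  stmt_10_general m N D U K V hU hUconn hUbdd hK hKU hUD hV Ψ hΨ hΨK
end

section
/- Let D₁, D₂, D₁', D₂' be open discs in ℂ, let U be an open neighborhood of closure(D₁) × closure(D₂) in ℂ², let V ⊆ ℂ^d be an open neighborhood of 0, and let (t,z) ↦ f_t(z) = (f_{t,1}(z), f_{t,2}(z)) be a holomorphic map from V × U to ℂ². If f₀ is analytic hyperbolic from D₁ × D₂ to D₁' × D₂', then there is an open neighborhood W of 0 with W ⊆ V such that for every t ∈ W the map f_t is analytic hyperbolic from D₁ × D₂ to D₁' × D₂'. -/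
/-!
Holomorphy of `f_t` near `closure D₁ × closure D₂` and the condition on `f_{t,1}` are open in `t`
by compactness. For the unique solvability of `f_{t,2}(w₁, w₂) = z₂`, fix `w₁ ∈ closure D₁` and
`z₂ ∈ closure D₂'`. The slice `g = f_{0,2}(w₁, ·)` is injective on the open set of points of `D₂`
that it maps into `U₂`; hence `g'` does not vanish at the solution `w₀`, and by the open mapping
theorem `g` sends `∂D₂` outside `U₂`. Since derivatives of holomorphic functions converge together
with the functions, a perturbed slice stays close to an invertible affine map near `w₀` and away
from `z₂` on the rest of `closure D₂`, so the solution persists and stays unique for `(t, w₁, z₂)`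
near `(0, w₁, z₂)`. Compactness of `closure D₁ × closure D₂'` makes the neighbourhoods uniform.
-/

open Set Metric Filter Function Topology
open scoped NNReal

/-- A map `f = (f₁,f₂)` is analytic (real) hyperbolic from `D₁ × D₂` to `D₁' × D₂'`
if it is holomorphic on an open neighborhood of `closure D₁ × closure D₂`,
`f₁(closure D₁ × closure D₂) ⊆ D₁'`, and there are open sets `U₁ ⊇ closure D₁`,
`U₂ ⊇ closure D₂'` such that for all `w₁ ∈ U₁`, `z₂ ∈ U₂` there is a unique
`w₂ ∈ D₂` with `f₂(w₁,w₂) = z₂`. -/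
def AnalyticHyperbolic (f : ℂ × ℂ → ℂ × ℂ) (D1 D2 D1' D2' : Set ℂ) : Prop :=
  (∃ Ω : Set (ℂ × ℂ), IsOpen Ω ∧ closure D1 ×ˢ closure D2 ⊆ Ω ∧
    DifferentiableOn ℂ f Ω) ∧
  (∀ p ∈ closure D1 ×ˢ closure D2, (f p).1 ∈ D1') ∧
  (∃ U1 U2 : Set ℂ, IsOpen U1 ∧ IsOpen U2 ∧ closure D1 ⊆ U1 ∧ closure D2' ⊆ U2 ∧
    ∀ w1 ∈ U1, ∀ z2 ∈ U2, ∃! w2, w2 ∈ D2 ∧ (f (w1, w2)).2 = z2)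

lemma injOn_of_existsUnique {α β : Type*} {g : α → β} {D : Set α} {T : Set β}
    (huniq : ∀ z ∈ T, ∃! w, w ∈ D ∧ g w = z) : InjOn g (D ∩ g ⁻¹' T) := fun _ hu _ hv huv ↦
  (huniq _ hu.2).unique ⟨hu.1, rfl⟩ ⟨hv.1, huv.symm⟩

lemma Set.InjOn.not_eventually_eq {α β : Type*} [TopologicalSpace α] {g : α → β} {s : Set α}
    {x : α} [(𝓝[≠] x).NeBot] (hinj : InjOn g s) (hs : s ∈ 𝓝 x) :
    ¬ ∀ᶠ z in 𝓝 x, g z = g x := fun h ↦ by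
  obtain ⟨z, ⟨hgz, hzs⟩, hzx⟩ :=
    ((eventually_nhdsWithin_of_eventually_nhds (h.and hs)).and
      (self_mem_nhdsWithin : {x}ᶜ ∈ 𝓝[≠] x)).exists
  exact hzx (hinj hzs (mem_of_mem_nhds hs) hgz)

lemma Set.InjOn.continuousAt_invFunOn {α β : Type*} [TopologicalSpace α] [TopologicalSpace β]
    [Nonempty α] {g : α → β} {s : Set α} {x : α} (hinj : InjOn g s) (hs : s ∈ 𝓝 x)
    (hopen : 𝓝 (g x) ≤ map g (𝓝 x)) : ContinuousAt (invFunOn g s) (g x) := by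
  rw [ContinuousAt, hinj.leftInvOn_invFunOn (mem_of_mem_nhds hs)]
  intro n hn
  have himg : g '' (n ∩ s) ∈ 𝓝 (g x) := hopen (image_mem_map (inter_mem hn hs))
  rw [mem_map]
  filter_upwards [himg]
  rintro _ ⟨z, ⟨hzn, hzs⟩, rfl⟩
  rwa [mem_preimage, hinj.leftInvOn_invFunOn hzs]

section Univalent

variable {g : ℂ → ℂ} {s : Set ℂ}

lemma AnalyticOnNhd.nhds_le_map_nhds_of_injOn {x : ℂ} (hg : AnalyticOnNhd ℂ g s)
    (hinj : InjOn g s) (hs : IsOpen s) (hx : x ∈ s) : 𝓝 (g x) ≤ map g (𝓝 x) :=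
  (hg x hx).eventually_constant_or_nhds_le_map_nhds.resolve_left
    (hinj.not_eventually_eq (hs.mem_nhds hx))

lemma hasDerivAt_invFunOn_of_injOn {z : ℂ} (hs : IsOpen s) (hg : DifferentiableOn ℂ g s)
    (hinj : InjOn g s) (hz : z ∈ s) (hz' : deriv g z ≠ 0) :
    HasDerivAt (invFunOn g s) (deriv g z)⁻¹ (g z) := by
  have hopen := (hg.analyticOnNhd hs).nhds_le_map_nhds_of_injOn hinj hs hz
  refine HasDerivAt.of_local_left_inverse (f := g)
    (hinj.continuousAt_invFunOn (hs.mem_nhds hz) hopen) ?_ hz' ?_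
  · rw [hinj.leftInvOn_invFunOn hz]
    exact (hg.differentiableAt (hs.mem_nhds hz)).hasDerivAt
  · filter_upwards [hopen (image_mem_map (hs.mem_nhds hz))] with y hy
    exact invFunOn_eq hy

/-- The inverse of `g` is continuous at `g z₀` and differentiable around it except at `g z₀`
(critical points of `g` are isolated), hence holomorphic there by the removable singularity
theorem; the chain rule for `invFunOn g s ∘ g = id` then forbids `deriv g z₀ = 0`. -/
theorem deriv_ne_zero_of_injOn {z₀ : ℂ} (hs : IsOpen s) (hg : DifferentiableOn ℂ g s)
    (hinj : InjOn g s) (hz₀ : z₀ ∈ s) : deriv g z₀ ≠ 0 := by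
  have han := hg.analyticOnNhd hs
  have hcrit : ∀ᶠ z in 𝓝[≠] z₀, deriv g z ≠ 0 := by
    refine (han.deriv z₀ hz₀).eventually_eq_zero_or_eventually_ne_zero.resolve_left fun h ↦
      hinj.not_eventually_eq (hs.mem_nhds hz₀) ?_
    obtain ⟨ε, hε, hball⟩ := Metric.mem_nhds_iff.1 (inter_mem h (hs.mem_nhds hz₀))
    filter_upwards [ball_mem_nhds z₀ hε] with z hz
    exact isOpen_ball.is_const_of_deriv_eq_zero (convex_ball z₀ ε).isPreconnected
      (hg.mono fun w hw ↦ (hball hw).2) (fun w hw ↦ (hball hw).1) hz (mem_ball_self hε)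
  set G := invFunOn g s
  have hGan : AnalyticAt ℂ G (g z₀) := by
    refine Complex.analyticAt_of_differentiable_on_punctured_nhds_of_continuousAt ?_
      (hinj.continuousAt_invFunOn (hs.mem_nhds hz₀)
        (han.nhds_le_map_nhds_of_injOn hinj hs hz₀))
    have hnear : {z | z ∈ s ∧ (z ≠ z₀ → deriv g z ≠ 0)} ∈ 𝓝 z₀ :=
      inter_mem (hs.mem_nhds hz₀) (eventually_nhdsWithin_iff.1 hcrit)
    filter_upwards [nhdsWithin_le_nhds
      (han.nhds_le_map_nhds_of_injOn hinj hs hz₀ (image_mem_map hnear)), self_mem_nhdsWithin]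
    rintro _ ⟨z, ⟨hzs, hz⟩, rfl⟩ hne
    exact (hasDerivAt_invFunOn_of_injOn hs hg hinj hzs
      (hz fun h ↦ hne (congrArg g h))).differentiableAt
  intro h0
  have hcomp : HasDerivAt (G ∘ g) (deriv G (g z₀) * 0) z₀ := by
    rw [← h0]
    exact hGan.differentiableAt.hasDerivAt.comp z₀
      (hg.differentiableAt (hs.mem_nhds hz₀)).hasDerivAt
  have hid : HasDerivAt (G ∘ g) 1 z₀ :=
    (hasDerivAt_id z₀).congr_of_eventuallyEq
      (eventually_of_mem (hs.mem_nhds hz₀) fun z hz ↦ hinj.leftInvOn_invFunOn hz)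
  simpa using hcomp.unique hid

end Univalent

section LocalInversion

variable {𝕜 : Type*} [RCLike 𝕜] {g : 𝕜 → 𝕜} {s : Set 𝕜} {c : 𝕜}

lemma approximatesLinearOn_of_norm_deriv_sub_le {k : ℝ≥0} (hs : Convex ℝ s)
    (hg : ∀ w ∈ s, DifferentiableAt 𝕜 g w) (hk : ∀ w ∈ s, ‖deriv g w - c‖ ≤ k) :
    ApproximatesLinearOn g ((1 : 𝕜 →L[𝕜] 𝕜).smulRight c) s k := by
  refine LipschitzOnWith.approximatesLinearOn <|
    hs.lipschitzOnWith_of_nnnorm_deriv_le (fun w hw ↦ ?_) fun w hw ↦ ?_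
  · exact (hg w hw).sub (ContinuousLinearMap.differentiableAt _)
  · have hd : HasDerivAt (g - ⇑((1 : 𝕜 →L[𝕜] 𝕜).smulRight c)) (deriv g w - c) w := by
      simpa using (hg w hw).hasDerivAt.sub ((1 : 𝕜 →L[𝕜] 𝕜).smulRight c).hasDerivAt
    rw [← NNReal.coe_le_coe, coe_nnnorm, hd.deriv]
    exact hk w hw

theorem existsUnique_zero_of_norm_deriv_sub_le {b : 𝕜} {ε : ℝ} (hc : c ≠ 0)
    (hg : ∀ w ∈ closedBall b ε, DifferentiableAt 𝕜 g w)
    (hk : ∀ w ∈ closedBall b ε, ‖deriv g w - c‖ ≤ ‖c‖ / 2) (hb : ‖g b‖ ≤ ‖c‖ * ε / 2) :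
    ∃! w, w ∈ closedBall b ε ∧ g w = 0 := by
  have happrox := approximatesLinearOn_of_norm_deriv_sub_le (k := ‖c‖₊ / 2) (convex_closedBall b ε)
    hg (by simpa using hk)
  have hc' : 0 < ‖c‖ := norm_pos_iff.2 hc
  have hε : 0 ≤ ε := by
    by_contra! hε
    nlinarith [norm_nonneg (g b)]
  let inv : ((1 : 𝕜 →L[𝕜] 𝕜).smulRight c).NonlinearRightInverse :=
    { toFun := fun y ↦ y / c
      nnnorm := ‖c‖₊⁻¹
      bound' := fun y ↦ by simp [div_eq_mul_inv, mul_comm]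
      right_inv' := fun y ↦ by simp [hc] }
  obtain ⟨w, hw, hw0⟩ := happrox.surjOn_closedBall_of_nonlinearRightInverse inv hε subset_rfl
    (show (0 : 𝕜) ∈ _ by
      rw [mem_closedBall, dist_zero_left]
      convert hb using 1
      simp only [inv, NNReal.coe_inv, coe_nnnorm, inv_inv, NNReal.coe_div]
      push_cast
      ring)
  refine ⟨w, ⟨hw, hw0⟩, fun v ⟨hv, hv0⟩ ↦ ?_⟩
  -- `g - c • id` is `‖c‖/2`-Lipschitz, so `g` separates points at rate `‖c‖/2`
  have hsep := happrox v hv w hw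
  rw [hv0, hw0, sub_self, zero_sub, norm_neg, ContinuousLinearMap.smulRight_apply,
    one_apply_eq_self, norm_smul] at hsep
  by_contra hne
  have : 0 < ‖v - w‖ := norm_pos_iff.2 (sub_ne_zero.2 hne)
  push_cast at hsep
  nlinarith

end LocalInversion

lemma TendstoUniformlyOn.eventually_forall_ne_zero {ι α E : Type*} [TopologicalSpace α]
    [NormedAddCommGroup E] {G : ι → α → E} {g : α → E} {p : Filter ι} {K : Set α}
    (h : TendstoUniformlyOn G g p K) (hK : IsCompact K) (hg : ContinuousOn g K)
    (hne : ∀ x ∈ K, g x ≠ 0) : ∀ᶠ i in p, ∀ x ∈ K, G i x ≠ 0 := by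
  obtain ⟨m, hm, hmK⟩ := hK.exists_forall_le' (continuous_norm.comp_continuousOn hg)
    (a := 0) fun x hx ↦ norm_pos_iff.2 (hne x hx)
  filter_upwards [Metric.tendstoUniformlyOn_iff.1 h m hm] with i hi x hx h0
  have := hi x hx
  rw [h0, dist_zero_right] at this
  exact (hmK x hx).not_gt this

theorem eventually_existsUnique_zero_of_tendstoLocallyUniformlyOn {ι : Type*} {φ : Filter ι}
    [φ.NeBot] {G : ι → ℂ → ℂ} {g : ℂ → ℂ} {O D : Set ℂ} (hO : IsOpen O)
    (hGg : TendstoLocallyUniformlyOn G g φ O) (hGd : ∀ᶠ i in φ, DifferentiableOn ℂ (G i) O)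
    (hD : IsOpen D) (hDc : IsCompact (closure D)) (hDO : closure D ⊆ O) {w₀ : ℂ} (hw₀ : w₀ ∈ D)
    (hzero : ∀ w ∈ closure D, g w = 0 ↔ w = w₀) (hg' : deriv g w₀ ≠ 0) :
    ∀ᶠ i in φ, ∃! w, w ∈ D ∧ G i w = 0 := by
  have hg : DifferentiableOn ℂ g O := hGg.differentiableOn hGd hO
  have hw₀O : w₀ ∈ O := hDO (subset_closure hw₀)
  set c := deriv g w₀
  have hc : 0 < ‖c‖ := norm_pos_iff.2 hg'
  obtain ⟨ε, hε, hεD, hεc⟩ : ∃ ε > 0, closedBall w₀ ε ⊆ D ∧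
      ∀ w ∈ closedBall w₀ ε, dist (deriv g w) c < ‖c‖ / 4 := by
    have hcont : ContinuousAt (deriv g) w₀ :=
      ((hg.analyticOnNhd hO).deriv w₀ hw₀O).continuousAt
    have hc4 : 0 < ‖c‖ / 4 := by positivity
    obtain ⟨ε, hε, hsub⟩ := nhds_basis_closedBall.mem_iff.1
      (inter_mem (hD.mem_nhds hw₀) (hcont.preimage_mem_nhds (ball_mem_nhds c hc4)))
    exact ⟨ε, hε, fun w hw ↦ (hsub hw).1, fun w hw ↦ (hsub hw).2⟩
  have hεO : closedBall w₀ ε ⊆ O := hεD.trans (subset_closure.trans hDO)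
  have hfar : ∀ᶠ i in φ, ∀ w ∈ closure D \ ball w₀ ε, G i w ≠ 0 := by
    refine TendstoUniformlyOn.eventually_forall_ne_zero ?_ (hDc.diff isOpen_ball)
      (hg.continuousOn.mono (sdiff_subset.trans hDO)) fun w hw h0 ↦ ?_
    · exact (tendstoLocallyUniformlyOn_iff_forall_isCompact hO).1 hGg _
        (sdiff_subset.trans hDO) (hDc.diff isOpen_ball)
    · exact hw.2 (((hzero w hw.1).1 h0) ▸ mem_ball_self hε)
  have hderiv : ∀ᶠ i in φ, ∀ w ∈ closedBall w₀ ε, dist (deriv g w) (deriv (G i) w) < ‖c‖ / 4 :=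
    Metric.tendstoUniformlyOn_iff.1 ((tendstoLocallyUniformlyOn_iff_forall_isCompact hO).1
      (hGg.deriv hGd hO) _ hεO (isCompact_closedBall w₀ ε)) _ (by positivity)
  have hcenter : ∀ᶠ i in φ, ‖G i w₀‖ < ‖c‖ * ε / 2 :=
    (hGg.tendsto_at hw₀O).norm.eventually_lt_const
      (by rw [(hzero w₀ (subset_closure hw₀)).2 rfl, norm_zero]; positivity)
  filter_upwards [hGd, hfar, hderiv, hcenter] with i hGi hfar hderiv hcenter
  obtain ⟨w, ⟨hw, hw0⟩, huniq⟩ := existsUnique_zero_of_norm_deriv_sub_le hg'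
    (fun w hw ↦ hGi.differentiableAt (hO.mem_nhds (hεO hw)))
    (fun w hw ↦ by
      rw [← dist_eq_norm]
      linarith [dist_triangle_left (deriv (G i) w) c (deriv g w), hεc w hw, hderiv w hw])
    hcenter.le
  refine ⟨w, ⟨hεD hw, hw0⟩, fun v ⟨hv, hv0⟩ ↦ huniq v ⟨?_, hv0⟩⟩
  by_contra hvε
  exact hfar v ⟨subset_closure hv, fun h ↦ hvε (ball_subset_closedBall h)⟩ hv0

theorem DifferentiableOn.exists_tendstoLocallyUniformlyOn {E : Type*} [NormedAddCommGroup E]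
    [NormedSpace ℂ E] {F : E → ℂ → ℂ} {Ω : Set (E × ℂ)} (hΩ : IsOpen Ω)
    (hF : DifferentiableOn ℂ (uncurry F) Ω) {x₀ : E} {K : Set ℂ} (hK : IsCompact K)
    (hKΩ : {x₀} ×ˢ K ⊆ Ω) :
    ∃ O, IsOpen O ∧ K ⊆ O ∧ TendstoLocallyUniformlyOn F (F x₀) (𝓝 x₀) O ∧
      ∀ᶠ x in 𝓝 x₀, DifferentiableOn ℂ (F x) O := by
  obtain ⟨N, O, hN, hO, hx₀N, hKO, hNO⟩ := generalized_tube_lemma isCompact_singleton hK hΩ hKΩ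
  have hx₀ : x₀ ∈ N := hx₀N rfl
  refine ⟨O, hO, hKO, ?_, ?_⟩
  · rw [tendstoLocallyUniformlyOn_iff_forall_isCompact hO]
    intro L hLO hL
    rw [Metric.tendstoUniformlyOn_iff]
    intro ε hε
    obtain ⟨v, hv, hvL⟩ := hL.mem_uniformity_of_prod
      (hF.continuousOn.mono ((prod_mono subset_rfl hLO).trans hNO)) hx₀
      (Metric.dist_mem_uniformity hε)
    rw [hN.nhdsWithin_eq hx₀] at hv
    filter_upwards [hv] with x hx w hw
    rw [dist_comm]
    exact hvL x hx w hw
  · filter_upwards [hN.mem_nhds hx₀] with x hx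
    exact hF.comp ((differentiable_const x).prodMk differentiable_id).differentiableOn
      fun w hw ↦ hNO ⟨hx, hw⟩

theorem apply_notMem_of_existsUnique {g : ℂ → ℂ} {D T : Set ℂ} (hD : IsOpen D)
    (hg : DifferentiableOn ℂ g D) (hT : IsOpen T) (huniq : ∀ z ∈ T, ∃! w, w ∈ D ∧ g w = z)
    {w : ℂ} (hw : w ∈ closure D) (hwD : w ∉ D) (hgw : ContinuousWithinAt g D w) : g w ∉ T := by
  intro hTw
  obtain ⟨w', ⟨hw'D, hw'w⟩, -⟩ := huniq (g w) hTw
  set s := D ∩ g ⁻¹' T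
  have hs : IsOpen s := hg.continuousOn.isOpen_inter_preimage hD hT
  have hinj : InjOn g s := injOn_of_existsUnique huniq
  have hw's : w' ∈ s := ⟨hw'D, by rwa [mem_preimage, hw'w]⟩
  obtain ⟨n, m, hn, hm, hnm⟩ := t2_separation_nhds (show w' ≠ w by rintro rfl; exact hwD hw'D)
  have himg : g '' (n ∩ s) ∈ 𝓝 (g w) := hw'w ▸
    ((hg.mono inter_subset_left).analyticOnNhd hs).nhds_le_map_nhds_of_injOn hinj hs hw's
      (image_mem_map (inter_mem hn (hs.mem_nhds hw's)))
  have := mem_closure_iff_nhdsWithin_neBot.1 hw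
  obtain ⟨u, ⟨hum, ⟨v, ⟨hvn, hvs⟩, hvu⟩, huT⟩, huD⟩ := Filter.nonempty_of_mem <|
    inter_mem (inter_mem (mem_nhdsWithin_of_mem_nhds hm) (hgw (inter_mem himg (hT.mem_nhds hTw))))
      self_mem_nhdsWithin
  exact hnm.ne_of_mem hvn hum (hinj hvs ⟨huD, huT⟩ hvu)

theorem eventually_existsUnique_apply_eq {E : Type*} [NormedAddCommGroup E] [NormedSpace ℂ E]
    {h : E × ℂ → ℂ} {Ω : Set (E × ℂ)} (hΩ : IsOpen Ω) (hh : DifferentiableOn ℂ h Ω) {x₀ : E}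
    {D T : Set ℂ} (hD : IsOpen D) (hDc : IsCompact (closure D))
    (hDΩ : ∀ w ∈ closure D, (x₀, w) ∈ Ω) (hT : IsOpen T)
    (huniq : ∀ z ∈ T, ∃! w, w ∈ D ∧ h (x₀, w) = z) {z₀ : ℂ} (hz₀ : z₀ ∈ T) :
    ∀ᶠ q : E × ℂ in 𝓝 (x₀, z₀), ∃! w, w ∈ D ∧ h (q.1, w) = q.2 := by
  set g := fun w ↦ h (x₀, w)
  set Ω₀ := {w | (x₀, w) ∈ Ω}
  have hΩ₀ : IsOpen Ω₀ := hΩ.preimage (continuous_const.prodMk continuous_id)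
  have hDΩ₀ : closure D ⊆ Ω₀ := hDΩ
  have hg : DifferentiableOn ℂ g Ω₀ :=
    hh.comp ((differentiable_const x₀).prodMk differentiable_id).differentiableOn fun _ hw ↦ hw
  have hgD : DifferentiableOn ℂ g D := hg.mono (subset_closure.trans hDΩ₀)
  obtain ⟨w₀, ⟨hw₀D, hw₀⟩, hw₀uniq⟩ := huniq z₀ hz₀
  have hzero : ∀ w ∈ closure D, g w - z₀ = 0 ↔ w = w₀ := by
    intro w hw
    rw [sub_eq_zero]
    refine ⟨fun hgw ↦ ?_, fun hw ↦ hw ▸ hw₀⟩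
    by_cases hwD : w ∈ D
    · exact hw₀uniq w ⟨hwD, hgw⟩
    · exact absurd (hgw ▸ hz₀) <| apply_notMem_of_existsUnique hD hgD hT huniq hw hwD
        (hg.differentiableAt (hΩ₀.mem_nhds (hDΩ₀ hw))).continuousAt.continuousWithinAt
  have hderiv : deriv (fun w ↦ g w - z₀) w₀ ≠ 0 := by
    rw [deriv_sub_const]
    exact deriv_ne_zero_of_injOn (hgD.continuousOn.isOpen_inter_preimage hD hT)
      (hgD.mono inter_subset_left) (injOn_of_existsUnique huniq)
      ⟨hw₀D, show h (x₀, w₀) ∈ T by rwa [hw₀]⟩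
  have hproj : Differentiable ℂ fun p : (E × ℂ) × ℂ ↦ (p.1.1, p.2) := by fun_prop
  obtain ⟨O, hO, hDO, hlim, hdiff⟩ :=
    DifferentiableOn.exists_tendstoLocallyUniformlyOn (F := fun (q : E × ℂ) w ↦ h (q.1, w) - q.2)
      (Ω := {p : (E × ℂ) × ℂ | (p.1.1, p.2) ∈ Ω}) (hΩ.preimage hproj.continuous)
      ((hh.comp hproj.differentiableOn fun _ hp ↦ hp).sub
        (differentiable_fst.snd : Differentiable ℂ fun p : (E × ℂ) × ℂ ↦ p.1.2).differentiableOn)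
      (x₀ := (x₀, z₀)) hDc
      (by rintro ⟨_, w⟩ ⟨rfl, hw⟩; exact hDΩ w hw)
  filter_upwards [eventually_existsUnique_zero_of_tendstoLocallyUniformlyOn hO hlim hdiff hD hDc
    hDO hw₀D hzero hderiv] with q hq
  simpa only [sub_eq_zero] using hq

theorem eventually_exists_isOpen_forall_of_isCompact {X Y Z : Type*} [TopologicalSpace X]
    [TopologicalSpace Y] [TopologicalSpace Z] {x₀ : X} {K : Set Y} {L : Set Z}
    (hK : IsCompact K) (hL : IsCompact L) {P : X → Y → Z → Prop}
    (hP : ∀ y ∈ K, ∀ z ∈ L, ∀ᶠ q : (X × Y) × Z in 𝓝 ((x₀, y), z), P q.1.1 q.1.2 q.2) :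
    ∀ᶠ x in 𝓝 x₀, ∃ A B, IsOpen A ∧ IsOpen B ∧ K ⊆ A ∧ L ⊆ B ∧ ∀ y ∈ A, ∀ z ∈ B, P x y z := by
  have hS : {q : (X × Y) × Z | P q.1.1 q.1.2 q.2} ∈ 𝓝ˢ (({x₀} ×ˢ K) ×ˢ L) := by
    refine mem_nhdsSet_iff_forall.2 ?_
    rintro ⟨⟨_, y⟩, z⟩ ⟨⟨rfl, hy⟩, hz⟩
    exact hP y hy z hz
  rw [(isCompact_singleton.prod hK).nhdsSet_prod_eq hL, isCompact_singleton.nhdsSet_prod_eq hK,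
    nhdsSet_singleton] at hS
  obtain ⟨t, ht, B, hB, htB⟩ := mem_prod_iff.1 hS
  obtain ⟨N, hN, A, hA, hNA⟩ := mem_prod_iff.1 ht
  filter_upwards [hN] with x hx
  exact ⟨interior A, interior B, isOpen_interior, isOpen_interior,
    subset_interior_iff_mem_nhdsSet.2 hA, subset_interior_iff_mem_nhdsSet.2 hB,
    fun y hy z hz ↦
      htB (mk_mem_prod (hNA (mk_mem_prod hx (interior_subset hy))) (interior_subset hz))⟩

theorem stmt_11_general (d : ℕ)
    (a1 a2 a1' a2' : ℂ) (r1 r2 r1' r2' : ℝ)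
    (U : Set (ℂ × ℂ)) (hU : IsOpen U)
    (hU_nbhd : closure (Metric.ball a1 r1) ×ˢ closure (Metric.ball a2 r2) ⊆ U)
    (V : Set (Fin d → ℂ)) (hV : IsOpen V) (h0V : 0 ∈ V)
    (f : (Fin d → ℂ) → ℂ × ℂ → ℂ × ℂ)
    (hf : DifferentiableOn ℂ (fun p : (Fin d → ℂ) × (ℂ × ℂ) => f p.1 p.2) (V ×ˢ U))
    (hf0 : AnalyticHyperbolic (f 0) (Metric.ball a1 r1) (Metric.ball a2 r2)
      (Metric.ball a1' r1') (Metric.ball a2' r2')) :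
    ∃ W : Set (Fin d → ℂ), IsOpen W ∧ 0 ∈ W ∧ W ⊆ V ∧
      ∀ t ∈ W, AnalyticHyperbolic (f t) (Metric.ball a1 r1) (Metric.ball a2 r2)
        (Metric.ball a1' r1') (Metric.ball a2' r2') := by
  obtain ⟨-, hf0₁, U1, U2, -, hU2, hU1s, hU2s, huniq⟩ := hf0
  have hcpt (a : ℂ) (r : ℝ) : IsCompact (closure (ball a r)) := isBounded_ball.isCompact_closure
  have hhol : ∀ᶠ t in 𝓝 0, ∃ Ω, IsOpen Ω ∧ closure (ball a1 r1) ×ˢ closure (ball a2 r2) ⊆ Ω ∧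
      DifferentiableOn ℂ (f t) Ω := by
    filter_upwards [hV.mem_nhds h0V] with t ht
    exact ⟨U, hU, hU_nbhd,
      hf.comp ((differentiable_const t).prodMk differentiable_id).differentiableOn
        fun p hp ↦ ⟨ht, hp⟩⟩
  have hfst : ∀ᶠ t in 𝓝 0, ∀ p ∈ closure (ball a1 r1) ×ˢ closure (ball a2 r2),
      (f t p).1 ∈ ball a1' r1' :=
    ((hcpt a1 r1).prod (hcpt a2 r2)).eventually_forall_of_forall_eventually fun p hp ↦
      (hf.continuousOn.continuousAt ((hV.prod hU).mem_nhds ⟨h0V, hU_nbhd hp⟩)).fst.eventually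
        (isOpen_ball.mem_nhds (hf0₁ p hp))
  have hproj : Differentiable ℂ fun p : ((Fin d → ℂ) × ℂ) × ℂ ↦ (p.1.1, (p.1.2, p.2)) := by
    fun_prop
  have hsnd := eventually_exists_isOpen_forall_of_isCompact (x₀ := (0 : Fin d → ℂ)) (hcpt a1 r1)
    (hcpt a2' r2') (P := fun t w1 z2 ↦ ∃! w2, w2 ∈ ball a2 r2 ∧ (f t (w1, w2)).2 = z2)
    fun w1 hw1 z2 hz2 ↦ eventually_existsUnique_apply_eq
      (h := fun p : ((Fin d → ℂ) × ℂ) × ℂ ↦ (f p.1.1 (p.1.2, p.2)).2)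
      ((hV.prod hU).preimage hproj.continuous)
      (differentiable_snd.comp_differentiableOn (hf.comp hproj.differentiableOn fun _ hp ↦ hp))
      isOpen_ball (hcpt a2 r2) (fun w hw ↦ ⟨h0V, hU_nbhd ⟨hw1, hw⟩⟩) hU2 (huniq w1 (hU1s hw1))
      (hU2s hz2)
  obtain ⟨W, hW, hWo, h0W⟩ :=
    _root_.eventually_nhds_iff.1 ((hhol.and (hfst.and hsnd)).and (hV.mem_nhds h0V))
  exact ⟨W, hWo, h0W, fun t ht ↦ (hW t ht).2, fun t ht ↦ (hW t ht).1⟩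

/-- Stability of analytic hyperbolicity under holomorphic perturbation.
If `(t,z) ↦ f_t(z)` is holomorphic on `V × U` with `U ⊇ closure D₁ × closure D₂`,
`V ∋ 0` open in `ℂ^d`, and `f₀` is analytic hyperbolic from `D₁ × D₂` to
`D₁' × D₂'`, then so is `f_t` for all `t` in some open neighborhood `W ⊆ V` of `0`. -/
theorem stmt_11 (d : ℕ)
    (a1 a2 a1' a2' : ℂ) (r1 r2 r1' r2' : ℝ)
    (hr1 : 0 < r1) (hr2 : 0 < r2) (hr1' : 0 < r1') (hr2' : 0 < r2')
    (U : Set (ℂ × ℂ)) (hU : IsOpen U)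
    (hU_nbhd : closure (Metric.ball a1 r1) ×ˢ closure (Metric.ball a2 r2) ⊆ U)
    (V : Set (Fin d → ℂ)) (hV : IsOpen V) (h0V : 0 ∈ V)
    (f : (Fin d → ℂ) → ℂ × ℂ → ℂ × ℂ)
    (hf : DifferentiableOn ℂ (fun p : (Fin d → ℂ) × (ℂ × ℂ) => f p.1 p.2) (V ×ˢ U))
    (hf0 : AnalyticHyperbolic (f 0) (Metric.ball a1 r1) (Metric.ball a2 r2)
      (Metric.ball a1' r1') (Metric.ball a2' r2')) :
    ∃ W : Set (Fin d → ℂ), IsOpen W ∧ 0 ∈ W ∧ W ⊆ V ∧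
      ∀ t ∈ W, AnalyticHyperbolic (f t) (Metric.ball a1 r1) (Metric.ball a2 r2)
        (Metric.ball a1' r1') (Metric.ball a2' r2') :=
  stmt_11_general d a1 a2 a1' a2' r1 r2 r1' r2' U hU hU_nbhd V hV h0V f hf hf0
end

section
/- Let ν : (0,∞) → ℝ be nonnegative and nondecreasing, and suppose there are constants C₃ ≥ 0 and C₄ ≥ 0 such that ∫₀^r ν(s)/s ds ≤ C₃ + C₄ |log r|³ for all r > 0. Then for every r ≥ 1 the function s ↦ ν(s)/s² is integrable on (r,∞), and there exist constants C₇ ≥ 0 and C₈ ≥ 0 such that for all r ≥ 1: ∫₀^r ν(s)/s ds + r ∫_r^∞ ν(s)/s² ds ≤ C₇ + C₈ (log r)³. -/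
open MeasureTheory Real Filter Set Topology

/-!
A nondecreasing `ν ≥ 0` is controlled by its logarithmic mean: `ν(s) ≤ ∫_s^{es} ν(t)/t dt`,
so the hypothesis gives `ν(s) ≤ C₃ + C₄ (1 + log s)³` for `s ≥ 1`. Integrating this bound
against `s⁻²` over `(r, ∞)` costs only a factor `1/r` times a cubic polynomial in `log r`,
which is absorbed, together with `∫₀^r ν(s)/s ds ≤ C₃ + C₄ (log r)³`, into `C₇ + C₈ (log r)³`.
-/

lemma mul_log_div_le_setIntegral_Ioc {ν : ℝ → ℝ} (hν_nonneg : ∀ t, 0 < t → 0 ≤ ν t)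
    (hν_mono : MonotoneOn ν (Ioi 0)) {s r : ℝ} (hs : 0 < s) (hsr : s ≤ r)
    (hν_int : IntegrableOn (fun t => ν t / t) (Ioc 0 r)) :
    ν s * log (r / s) ≤ ∫ t in Ioc 0 r, ν t / t := by
  have hIoc : Ioc s r ⊆ Ioc 0 r := Ioc_subset_Ioc_left hs.le
  calc ν s * log (r / s) = ∫ t in Ioc s r, ν s / t := by
        rw [← integral_one_div_of_pos hs (hs.trans_le hsr), ← intervalIntegral.integral_const_mul,
          intervalIntegral.integral_of_le hsr]
        simp only [mul_one_div]
    _ ≤ ∫ t in Ioc s r, ν t / t := by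
        refine setIntegral_mono_on ?_ (hν_int.mono_set hIoc) measurableSet_Ioc fun t ht => ?_
        · exact (continuousOn_const.div continuousOn_id fun t ht => (hs.trans_le ht.1).ne')
            |>.integrableOn_Icc.mono_set Ioc_subset_Icc_self
        · exact div_le_div_of_nonneg_right (hν_mono hs (hs.trans ht.1) ht.1.le)
            (hs.trans ht.1).le
    _ ≤ ∫ t in Ioc 0 r, ν t / t := by
        refine setIntegral_mono_set hν_int ?_ hIoc.eventuallyLE
        filter_upwards [ae_restrict_mem measurableSet_Ioc] with t ht
        exact div_nonneg (hν_nonneg t ht.1) ht.1.le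

lemma le_add_mul_one_add_log_pow_of_setIntegral_le {ν : ℝ → ℝ} {a b : ℝ}
    (hν_nonneg : ∀ t, 0 < t → 0 ≤ ν t) (hν_mono : MonotoneOn ν (Ioi 0))
    (hν_int : ∀ r, 0 < r → IntegrableOn (fun t => ν t / t) (Ioc 0 r))
    (hν_bound : ∀ r, 0 < r → ∫ t in Ioc 0 r, ν t / t ≤ a + b * |log r| ^ 3)
    {s : ℝ} (hs : 1 ≤ s) : ν s ≤ a + b * (1 + log s) ^ 3 := by
  have hs0 : 0 < s := zero_lt_one.trans_le hs
  have hes : 0 < exp 1 * s := by positivity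
  have hlog : log (exp 1 * s) = 1 + log s := by rw [log_mul (exp_pos 1).ne' hs0.ne', log_exp]
  have hmass := mul_log_div_le_setIntegral_Ioc hν_nonneg hν_mono hs0
    (le_mul_of_one_le_left hs0.le (one_le_exp zero_le_one)) (hν_int _ hes)
  rw [mul_div_cancel_right₀ _ hs0.ne', log_exp, mul_one] at hmass
  calc ν s ≤ ∫ t in Ioc 0 (exp 1 * s), ν t / t := hmass
    _ ≤ a + b * |log (exp 1 * s)| ^ 3 := hν_bound _ hes
    _ = a + b * (1 + log s) ^ 3 := by rw [hlog, abs_of_nonneg (by linarith [log_nonneg hs])]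

/-- `(P + P' + P'' + P''')(u)` for `P(u) = (1 + u)³`, so that `-(a + b cubeTailPoly (log x)) / x`
is an antiderivative of `(a + b P(log x)) / x²`. -/
def cubeTailPoly (u : ℝ) : ℝ := u ^ 3 + 6 * u ^ 2 + 15 * u + 16

lemma hasDerivAt_cubeTailPoly_log_div (a b : ℝ) {x : ℝ} (hx : 0 < x) :
    HasDerivAt (fun y => -((a + b * cubeTailPoly (log y)) / y))
      ((a + b * (1 + log x) ^ 3) / x ^ 2) x := by
  have hlog := hasDerivAt_log hx.ne'
  have hQ : HasDerivAt (fun y => cubeTailPoly (log y))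
      ((3 * log x ^ 2 + 12 * log x + 15) * x⁻¹) x := by
    have := (((hlog.fun_pow 3).add ((hlog.fun_pow 2).const_mul 6)).add
      (hlog.const_mul 15)).add_const 16
    exact this.congr_deriv (by push_cast; ring)
  refine (((hQ.const_mul b).const_add a).fun_div (hasDerivAt_id' x) hx.ne').fun_neg.congr_deriv ?_
  simp only [cubeTailPoly]
  field_simp
  ring

lemma tendsto_cubeTailPoly_log_div_atTop (a b : ℝ) :
    Tendsto (fun y => (a + b * cubeTailPoly (log y)) / y) atTop (𝓝 0) := by
  have hpow (n : ℕ) : Tendsto (fun y => log y ^ n / y) atTop (𝓝 0) := by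
    simpa using tendsto_pow_log_div_mul_add_atTop 1 0 n one_ne_zero
  have := ((((hpow 0).const_mul (a + 16 * b)).add ((hpow 3).const_mul b)).add
    ((hpow 2).const_mul (6 * b))).add ((hpow 1).const_mul (15 * b))
  simp only [mul_zero, add_zero] at this
  refine this.congr fun y => ?_
  simp only [cubeTailPoly]
  ring

section CubeLogTail

variable {a b r : ℝ}

lemma add_mul_one_add_log_pow_div_sq_nonneg (ha : 0 ≤ a) (hb : 0 ≤ b) {x : ℝ} (hx : 1 ≤ x) :
    0 ≤ (a + b * (1 + log x) ^ 3) / x ^ 2 := by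
  have := log_nonneg hx
  positivity

lemma integrableOn_Ioi_add_mul_one_add_log_pow_div_sq (ha : 0 ≤ a) (hb : 0 ≤ b) (hr : 1 ≤ r) :
    IntegrableOn (fun x => (a + b * (1 + log x) ^ 3) / x ^ 2) (Ioi r) :=
  integrableOn_Ioi_deriv_of_nonneg' (fun x hx => hasDerivAt_cubeTailPoly_log_div a b
      (zero_lt_one.trans_le (hr.trans hx)))
    (fun x hx => add_mul_one_add_log_pow_div_sq_nonneg ha hb (hr.trans hx.out.le))
    (by simpa using (tendsto_cubeTailPoly_log_div_atTop a b).neg)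

lemma integral_Ioi_add_mul_one_add_log_pow_div_sq (ha : 0 ≤ a) (hb : 0 ≤ b) (hr : 1 ≤ r) :
    ∫ x in Ioi r, (a + b * (1 + log x) ^ 3) / x ^ 2 = (a + b * cubeTailPoly (log r)) / r := by
  rw [integral_Ioi_of_hasDerivAt_of_tendsto' (fun x hx => hasDerivAt_cubeTailPoly_log_div a b
      (zero_lt_one.trans_le (hr.trans hx)))
    (integrableOn_Ioi_add_mul_one_add_log_pow_div_sq ha hb hr)
    (by simpa using (tendsto_cubeTailPoly_log_div_atTop a b).neg)]
  ring

variable {ν : ℝ → ℝ} (hν_nonneg : ∀ t, 0 < t → 0 ≤ ν t) (hν_mono : MonotoneOn ν (Ioi 0))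
  (hν_le : ∀ s, 1 ≤ s → ν s ≤ a + b * (1 + log s) ^ 3)
include hν_nonneg hν_mono hν_le

lemma integrableOn_Ioi_div_sq_of_le_add_mul_one_add_log_pow (ha : 0 ≤ a) (hb : 0 ≤ b)
    (hr : 1 ≤ r) :
    IntegrableOn (fun s => ν s / s ^ 2) (Ioi r) := by
  refine (integrableOn_Ioi_add_mul_one_add_log_pow_div_sq ha hb hr).mono' ?_ ?_
  · refine ((aemeasurable_restrict_of_monotoneOn measurableSet_Ioi ?_).div
      (by fun_prop)).aestronglyMeasurable
    exact hν_mono.mono fun x hx => zero_lt_one.trans_le (hr.trans hx.out.le)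
  · filter_upwards [ae_restrict_mem measurableSet_Ioi] with s hs
    have hs1 : 1 ≤ s := hr.trans hs.out.le
    rw [Real.norm_of_nonneg (div_nonneg (hν_nonneg s (zero_lt_one.trans_le hs1)) (sq_nonneg s))]
    exact div_le_div_of_nonneg_right (hν_le s hs1) (sq_nonneg s)

lemma mul_integral_Ioi_div_sq_le_of_le_add_mul_one_add_log_pow (ha : 0 ≤ a) (hb : 0 ≤ b)
    (hr : 1 ≤ r) :
    r * ∫ s in Ioi r, ν s / s ^ 2 ≤ a + b * cubeTailPoly (log r) := by
  have hr0 : 0 < r := zero_lt_one.trans_le hr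
  have hle : ∫ s in Ioi r, ν s / s ^ 2 ≤ (a + b * cubeTailPoly (log r)) / r := by
    rw [← integral_Ioi_add_mul_one_add_log_pow_div_sq ha hb hr]
    refine setIntegral_mono_on
      (integrableOn_Ioi_div_sq_of_le_add_mul_one_add_log_pow hν_nonneg hν_mono hν_le ha hb hr)
      (integrableOn_Ioi_add_mul_one_add_log_pow_div_sq ha hb hr) measurableSet_Ioi
      fun s hs => div_le_div_of_nonneg_right (hν_le s (hr.trans hs.out.le)) (sq_nonneg s)
  calc r * ∫ s in Ioi r, ν s / s ^ 2 ≤ r * ((a + b * cubeTailPoly (log r)) / r) := by gcongr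
    _ = a + b * cubeTailPoly (log r) := by field_simp

end CubeLogTail

lemma cubeTailPoly_le {u : ℝ} (hu : 0 ≤ u) : cubeTailPoly u ≤ 37 + 22 * u ^ 3 := by
  unfold cubeTailPoly
  nlinarith [mul_nonneg hu (sq_nonneg (u - 1)), sq_nonneg (u - 1)]

/-- If `ν : (0,∞) → ℝ` is nonnegative, nondecreasing, and satisfies
`∫₀^r ν(s)/s ds ≤ C₃ + C₄ |log r|³` for all `r > 0`, then for every `r ≥ 1` the
function `s ↦ ν(s)/s²` is integrable on `(r,∞)`, and there are `C₇, C₈ ≥ 0` with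
`∫₀^r ν(s)/s ds + r ∫_r^∞ ν(s)/s² ds ≤ C₇ + C₈ (log r)³` for all `r ≥ 1`. -/
theorem stmt_13 (ν : ℝ → ℝ) (C₃ C₄ : ℝ) (hC₃ : 0 ≤ C₃) (hC₄ : 0 ≤ C₄)
    (hν_nonneg : ∀ s : ℝ, 0 < s → 0 ≤ ν s)
    (hν_mono : ∀ s t : ℝ, 0 < s → s ≤ t → ν s ≤ ν t)
    (hν_int : ∀ r : ℝ, 0 < r → IntegrableOn (fun s => ν s / s) (Set.Ioc 0 r))
    (hν_bound : ∀ r : ℝ, 0 < r →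
      ∫ s in Set.Ioc 0 r, ν s / s ≤ C₃ + C₄ * |Real.log r| ^ 3) :
    (∀ r : ℝ, 1 ≤ r → IntegrableOn (fun s => ν s / s ^ 2) (Set.Ioi r)) ∧
    ∃ C₇ C₈ : ℝ, 0 ≤ C₇ ∧ 0 ≤ C₈ ∧ ∀ r : ℝ, 1 ≤ r →
      (∫ s in Set.Ioc 0 r, ν s / s) + r * ∫ s in Set.Ioi r, ν s / s ^ 2
        ≤ C₇ + C₈ * (Real.log r) ^ 3 := by
  have hmono : MonotoneOn ν (Ioi 0) := fun s hs t _ hst => hν_mono s t hs hst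
  have hpointwise (s : ℝ) (hs : 1 ≤ s) : ν s ≤ C₃ + C₄ * (1 + log s) ^ 3 :=
    le_add_mul_one_add_log_pow_of_setIntegral_le hν_nonneg hmono hν_int hν_bound hs
  refine ⟨fun r hr => integrableOn_Ioi_div_sq_of_le_add_mul_one_add_log_pow hν_nonneg hmono
    hpointwise hC₃ hC₄ hr, 2 * C₃ + 37 * C₄, 23 * C₄, by positivity, by positivity, fun r hr => ?_⟩
  have hlog : 0 ≤ log r := log_nonneg hr
  have hhead := hν_bound r (zero_lt_one.trans_le hr)
  rw [abs_of_nonneg hlog] at hhead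
  have htail := mul_integral_Ioi_div_sq_le_of_le_add_mul_one_add_log_pow hν_nonneg hmono
    hpointwise hC₃ hC₄ hr
  linarith [mul_le_mul_of_nonneg_left (cubeTailPoly_le hlog) hC₄]
end

section
/- Let D₃ > 0 and D₄ > 0, and let (α_n)_{n∈ℕ} be complex numbers with |α_n| ≤ D₃ exp(−D₄ n^{3/2}) for all n ∈ ℕ. Then the power series Σ_{n≥0} α_n zⁿ converges absolutely for every z ∈ ℂ, and there exist constants C₁ > 0 and C₂ > 0 such that |Σ_{n≥0} α_n zⁿ| ≤ exp(C₁ + C₂ |log|z||³) for every z ∈ ℂ with z ≠ 0. -/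
/-!
Writing `L = |log ‖z‖|`, the term `α n zⁿ` is at most `D₃ exp (-D₄ n^{3/2} + n L)`.
By a Young-type inequality, `n L ≤ (D₄/2) n^{3/2} + L³/(D₄/2)²`, so the term is at most
`D₃ exp (L³/(D₄/2)²) · qⁿ` with `q = exp (-D₄/2) < 1`, and summing the geometric series
gives the growth bound.
-/

open Real

lemma Real.rpow_three_halves {x : ℝ} (hx : 0 ≤ x) : x ^ (3/2 : ℝ) = x * √x := by
  rw [show (3/2 : ℝ) = 1 + 1/2 by norm_num, rpow_add' hx (by norm_num), rpow_one,
    ← sqrt_eq_rpow]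

/-- Split according to whether `L ≤ c √x` or `√x < L / c`. -/
lemma Real.mul_le_rpow_three_halves_add_pow_three {c x L : ℝ} (hc : 0 < c) (hx : 0 ≤ x)
    (hL : 0 ≤ L) : x * L ≤ c * x ^ (3/2 : ℝ) + L ^ 3 / c ^ 2 := by
  have hsqrt := sqrt_nonneg x
  have hsq := sq_sqrt hx
  rw [rpow_three_halves hx]
  rcases le_or_gt L (c * √x) with h | h
  · have : 0 ≤ L ^ 3 / c ^ 2 := by positivity
    nlinarith
  · have hsqrt_lt : √x < L / c := by rwa [lt_div_iff₀ hc, mul_comm]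
    have hx_le : x ≤ L ^ 2 / c ^ 2 := by
      rw [← hsq, ← div_pow]; exact pow_le_pow_left₀ hsqrt hsqrt_lt.le 2
    calc x * L ≤ L ^ 2 / c ^ 2 * L := mul_le_mul_of_nonneg_right hx_le hL
      _ = L ^ 3 / c ^ 2 := by ring
      _ ≤ _ := le_add_of_nonneg_left (by positivity)

lemma Real.natCast_le_rpow_three_halves (n : ℕ) : (n : ℝ) ≤ (n : ℝ) ^ (3/2 : ℝ) := by
  rcases Nat.eq_zero_or_pos n with rfl | hn
  · simp
  · exact self_le_rpow_of_one_le (by exact_mod_cast hn) (by norm_num)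

lemma Real.neg_mul_rpow_three_halves_add_mul_le {D L : ℝ} (hD : 0 < D) (hL : 0 ≤ L) (n : ℕ) :
    -D * (n : ℝ) ^ (3/2 : ℝ) + n * L ≤ -(D/2) * n + L ^ 3 / (D/2) ^ 2 := by
  have hyoung := mul_le_rpow_three_halves_add_pow_three (half_pos hD) n.cast_nonneg hL
  have hn := mul_le_mul_of_nonneg_left (natCast_le_rpow_three_halves n) (half_pos hD).le
  linarith

lemma Real.le_exp_abs_log (x : ℝ) : x ≤ exp |log x| :=
  (le_exp_log x).trans (exp_le_exp.2 (le_abs_self _))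

lemma norm_mul_pow_le_of_norm_le_exp_neg_rpow_three_halves {𝕜 : Type*} [NormedDivisionRing 𝕜]
    {D₃ D₄ : ℝ} (hD₄ : 0 < D₄) {a : 𝕜} {n : ℕ}
    (ha : ‖a‖ ≤ D₃ * exp (-D₄ * (n : ℝ) ^ (3/2 : ℝ))) (z : 𝕜) :
    ‖a * z ^ n‖ ≤ D₃ * exp (|log ‖z‖| ^ 3 / (D₄/2) ^ 2) * exp (-(D₄/2)) ^ n := by
  set L := |log ‖z‖|
  have hD₃ : 0 ≤ D₃ * exp (-D₄ * (n : ℝ) ^ (3/2 : ℝ)) := (norm_nonneg a).trans ha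
  have hz : ‖z‖ ^ n ≤ exp (n * L) := by
    rw [exp_nat_mul]; exact pow_le_pow_left₀ (norm_nonneg z) (le_exp_abs_log _) n
  calc ‖a * z ^ n‖ = ‖a‖ * ‖z‖ ^ n := by rw [norm_mul, norm_pow]
    _ ≤ D₃ * exp (-D₄ * (n : ℝ) ^ (3/2 : ℝ)) * exp (n * L) :=
      mul_le_mul ha hz (by positivity) hD₃
    _ = D₃ * exp (-D₄ * (n : ℝ) ^ (3/2 : ℝ) + n * L) := by rw [exp_add, mul_assoc]
    _ ≤ D₃ * exp (-(D₄/2) * n + L ^ 3 / (D₄/2) ^ 2) := by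
      refine mul_le_mul_of_nonneg_left (exp_le_exp.2 ?_)
        (nonneg_of_mul_nonneg_left hD₃ (exp_pos _))
      exact neg_mul_rpow_three_halves_add_mul_le hD₄ (abs_nonneg _) n
    _ = D₃ * exp (L ^ 3 / (D₄/2) ^ 2) * exp (-(D₄/2)) ^ n := by
      rw [← exp_nat_mul, exp_add]; ring_nf

/-- Stretched-exponential coefficient decay gives entire functions of
logarithmic-cube growth. If `|α_n| ≤ D₃ exp(−D₄ n^{3/2})` then `Σ α_n zⁿ` converges
absolutely everywhere and `|Σ α_n zⁿ| ≤ exp(C₁ + C₂ |log|z||³)` for `z ≠ 0`. -/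
theorem stmt_14 (D₃ D₄ : ℝ) (hD₃ : 0 < D₃) (hD₄ : 0 < D₄) (α : ℕ → ℂ)
    (hα : ∀ n : ℕ, ‖α n‖ ≤ D₃ * Real.exp (-D₄ * (n : ℝ) ^ (3/2 : ℝ))) :
    (∀ z : ℂ, Summable (fun n : ℕ => ‖α n * z ^ n‖)) ∧
    ∃ C₁ C₂ : ℝ, 0 < C₁ ∧ 0 < C₂ ∧ ∀ z : ℂ, z ≠ 0 →
      ‖∑' n : ℕ, α n * z ^ n‖
        ≤ Real.exp (C₁ + C₂ * |Real.log ‖z‖| ^ 3) := by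
  set q := exp (-(D₄/2))
  have hq0 : 0 ≤ q := (exp_pos _).le
  have hq1 : q < 1 := exp_lt_one_iff.2 (by linarith)
  have hterm z n := norm_mul_pow_le_of_norm_le_exp_neg_rpow_three_halves hD₄ (hα n) z
  have hgeom := hasSum_geometric_of_lt_one hq0 hq1
  refine ⟨fun z => .of_nonneg_of_le (fun _ => norm_nonneg _) (hterm z)
      (hgeom.summable.mul_left _), D₃ * (1 - q)⁻¹, ((D₄/2) ^ 2)⁻¹,
      mul_pos hD₃ (inv_pos.2 (sub_pos.2 hq1)), by positivity, fun z _ => ?_⟩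
  calc ‖∑' n, α n * z ^ n‖
        ≤ D₃ * exp (|log ‖z‖| ^ 3 / (D₄/2) ^ 2) * (1 - q)⁻¹ :=
        tsum_of_norm_bounded (hgeom.mul_left _) (hterm z)
    _ = D₃ * (1 - q)⁻¹ * exp (|log ‖z‖| ^ 3 / (D₄/2) ^ 2) := by ring
    _ ≤ exp (D₃ * (1 - q)⁻¹) * exp (|log ‖z‖| ^ 3 / (D₄/2) ^ 2) := by
      gcongr; linarith [add_one_le_exp (D₃ * (1 - q)⁻¹)]
    _ = exp (D₃ * (1 - q)⁻¹ + ((D₄/2) ^ 2)⁻¹ * |log ‖z‖| ^ 3) := by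
      rw [← exp_add, div_eq_inv_mul]
end
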